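/- arXiv:1711.09628 — 10 statements merged into one kernel-verified Lean document; each statement's English description precedes it below -/
import Mathlib

section
/- Let F be a class of probability measures on an observation space Ω, and let T : F → ℝ^k be an elicitable functional admitting a strictly F-consistent scoring function S : ℝ^k × Ω → ℝ such that for every F ∈ F the expected score x ↦ S̄(x,F) := E_F[S(x,Y)] is continuous on ℝ^k. Then T is mixture-continuous on every subclass F₀ ⊆ F such that F₀ is convex (closed under mixtures (1−λ)F + λG, λ ∈ [0,1]) and the image T(F₀) is bounded; that is, for all F, G ∈ F₀ the map [0,1] → ℝ^k, λ ↦ T((1−λ)F + λG), is continuous. -/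
/-!
Along a segment of mixtures the expected score `(x, λ) ↦ S̄(x, (1-λ)F + λG)` is affine in `λ`,
hence jointly continuous, and `T` of the mixture is its unique minimiser in `x`. These
minimisers lie in the compact closure of `T(𝓕₀)`, and any cluster point of them as `λ → λ₀`
is again a minimiser at `λ₀`, since minimality is a closed condition; uniqueness makes it
`T` of the mixture at `λ₀`, which gives continuity.
-/

open MeasureTheory ENNReal

noncomputable def escore {α Ω : Type*} [MeasurableSpace Ω]
    (S : α → Ω → ℝ) (x : α) (F : Measure Ω) : ℝ :=
  ∫ y, S x y ∂F

/-- The mixture `(1 - lam) • F + lam • G` of two measures. -/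
noncomputable def mix {Ω : Type*} [MeasurableSpace Ω]
    (F G : Measure Ω) (lam : ℝ) : Measure Ω :=
  ENNReal.ofReal (1 - lam) • F + ENNReal.ofReal lam • G

/-- The class `𝓕` is convex (closed under mixtures). -/
def MixConvex {Ω : Type*} [MeasurableSpace Ω] (𝓕 : Set (Measure Ω)) : Prop :=
  ∀ F ∈ 𝓕, ∀ G ∈ 𝓕, ∀ lam ∈ Set.Icc (0:ℝ) 1, mix F G lam ∈ 𝓕

/-- `S` is an `𝓕`-consistent scoring function for `T` on the action domain `A`. -/
def Consistent {α Ω : Type*} [MeasurableSpace Ω]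
    (𝓕 : Set (Measure Ω)) (A : Set α) (T : Measure Ω → α) (S : α → Ω → ℝ) : Prop :=
  ∀ F ∈ 𝓕, ∀ x ∈ A, escore S (T F) F ≤ escore S x F

/-- `S` is a strictly `𝓕`-consistent scoring function for `T` on the action domain `A`. -/
def StrictlyConsistent {α Ω : Type*} [MeasurableSpace Ω]
    (𝓕 : Set (Measure Ω)) (A : Set α) (T : Measure Ω → α) (S : α → Ω → ℝ) : Prop :=
  Consistent 𝓕 A T S ∧
    ∀ F ∈ 𝓕, ∀ x ∈ A, escore S x F = escore S (T F) F → x = T F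

/-- `T` is mixture-continuous: `fun lam => T ((1-lam) • F + lam • G)` is continuous on `[0,1]`. -/
def MixContinuous {Ω : Type*} [MeasurableSpace Ω] {k : ℕ}
    (𝓕 : Set (Measure Ω)) (T : Measure Ω → (Fin k → ℝ)) : Prop :=
  ∀ F ∈ 𝓕, ∀ G ∈ 𝓕, ContinuousOn (fun lam => T (mix F G lam)) (Set.Icc (0:ℝ) 1)

open Filter Topology Set

theorem MapClusterPt.prodMk_of_tendsto {α X Y : Type*} [TopologicalSpace X] [TopologicalSpace Y]
    {l : Filter α} {f : α → X} {g : α → Y} {x : X} {y : Y}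
    (hf : MapClusterPt x l f) (hg : Tendsto g l (𝓝 y)) :
    MapClusterPt (x, y) l fun a => (f a, g a) := by
  rw [mapClusterPt_iff_frequently] at hf ⊢
  intro s hs
  obtain ⟨u, hu, v, hv, huv⟩ := mem_nhds_prod_iff.1 hs
  exact ((hf u hu).and_eventually (hg hv)).mono fun a ha => huv ⟨ha.1, ha.2⟩

theorem continuousOn_of_unique_minimizer {X Y β : Type*} [TopologicalSpace X]
    [TopologicalSpace Y] [Preorder β] [TopologicalSpace β] [OrderClosedTopology β]
    {V : Y → X → β} (hV : Continuous fun p : Y × X => V p.1 p.2)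
    {K : Set Y} (hK : IsCompact K) {s : Set X} {f : X → Y} (hfK : MapsTo f s K)
    (hmin : ∀ t ∈ s, ∀ y, V (f t) t ≤ V y t)
    (huniq : ∀ t ∈ s, ∀ y, V y t ≤ V (f t) t → y = f t) :
    ContinuousOn f s := by
  intro t₀ ht₀
  refine hK.tendsto_nhds_of_unique_mapClusterPt (eventually_nhdsWithin_of_forall hfK)
    fun y _ hy => huniq t₀ ht₀ y ?_
  have hclosed : IsClosed {p : Y × X | V p.1 p.2 ≤ V (f t₀) p.2} :=
    isClosed_le hV (hV.comp (continuous_const.prodMk continuous_snd))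
  exact hclosed.mem_of_mapClusterPt (hy.prodMk_of_tendsto (tendsto_id.mono_left
    nhdsWithin_le_nhds)) (eventually_nhdsWithin_of_forall fun t ht => hmin t ht (f t₀))

theorem escore_mix {α Ω : Type*} [MeasurableSpace Ω] {S : α → Ω → ℝ} {x : α}
    {F G : Measure Ω} {lam : ℝ} (hF : Integrable (S x) F) (hG : Integrable (S x) G)
    (h0 : 0 ≤ lam) (h1 : lam ≤ 1) :
    escore S x (mix F G lam) = (1 - lam) * escore S x F + lam * escore S x G := by
  rw [escore, mix, integral_add_measure (hF.smul_measure ofReal_ne_top)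
    (hG.smul_measure ofReal_ne_top), integral_smul_measure, integral_smul_measure,
    toReal_ofReal (by linarith), toReal_ofReal h0]
  rfl

theorem StrictlyConsistent.eq_of_escore_le {α Ω : Type*} [MeasurableSpace Ω]
    {𝓕 : Set (Measure Ω)} {A : Set α} {T : Measure Ω → α} {S : α → Ω → ℝ}
    (hS : StrictlyConsistent 𝓕 A T S) {F : Measure Ω} (hF : F ∈ 𝓕) {x : α} (hx : x ∈ A)
    (h : escore S x F ≤ escore S (T F) F) : x = T F :=
  hS.2 F hF x hx (h.antisymm (hS.1 F hF x hx))

theorem statement0_general {Ω : Type*} [MeasurableSpace Ω] {k : ℕ}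
    (𝓕 : Set (Measure Ω))
    (T : Measure Ω → (Fin k → ℝ)) (S : (Fin k → ℝ) → Ω → ℝ)
    (hSint : ∀ (x : Fin k → ℝ), ∀ F ∈ 𝓕, Integrable (S x) F)
    (hS : StrictlyConsistent 𝓕 Set.univ T S)
    (hcont : ∀ F ∈ 𝓕, Continuous fun x => escore S x F)
    (𝓕₀ : Set (Measure Ω)) (hsub : 𝓕₀ ⊆ 𝓕) (hconv : MixConvex 𝓕₀)
    (hbdd : Bornology.IsBounded (T '' 𝓕₀)) :
    ∀ F ∈ 𝓕₀, ∀ G ∈ 𝓕₀,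
      ContinuousOn (fun lam => T (mix F G lam)) (Set.Icc (0:ℝ) 1) := by
  intro F hF G hG
  have hmix : ∀ t ∈ Icc (0:ℝ) 1, mix F G t ∈ 𝓕 := fun t ht => hsub (hconv F hF G hG t ht)
  have hescore : ∀ y, ∀ t ∈ Icc (0:ℝ) 1,
      escore S y (mix F G t) = (1 - t) * escore S y F + t * escore S y G := fun y t ht =>
    escore_mix (hSint y F (hsub hF)) (hSint y G (hsub hG)) ht.1 ht.2
  refine continuousOn_of_unique_minimizer
    (V := fun y t => (1 - t) * escore S y F + t * escore S y G) ?_ hbdd.isCompact_closure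
    (fun t ht => subset_closure (mem_image_of_mem T (hconv F hF G hG t ht)))
    (fun t ht y => ?_) (fun t ht y hy => ?_)
  · have hcontF := hcont F (hsub hF)
    have hcontG := hcont G (hsub hG)
    fun_prop
  · simpa only [hescore _ t ht] using hS.1 _ (hmix t ht) y trivial
  · rw [← hescore _ t ht, ← hescore _ t ht] at hy
    exact hS.eq_of_escore_le (hmix t ht) trivial hy

/-- If `T` is elicitable with a strictly `𝓕`-consistent scoring function `S`
whose expected score `x ↦ S̄(x,F)` is continuous on `ℝ^k` for every `F ∈ 𝓕`, then `T` is
mixture-continuous on every convex subclass `𝓕₀ ⊆ 𝓕` whose image `T '' 𝓕₀` is bounded. -/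
theorem statement0 {Ω : Type*} [MeasurableSpace Ω] {k : ℕ}
    (𝓕 : Set (Measure Ω)) (hprob : ∀ F ∈ 𝓕, IsProbabilityMeasure F)
    (T : Measure Ω → (Fin k → ℝ)) (S : (Fin k → ℝ) → Ω → ℝ)
    (hSint : ∀ (x : Fin k → ℝ), ∀ F ∈ 𝓕, Integrable (S x) F)
    (hS : StrictlyConsistent 𝓕 Set.univ T S)
    (hcont : ∀ F ∈ 𝓕, Continuous fun x => escore S x F)
    (𝓕₀ : Set (Measure Ω)) (hsub : 𝓕₀ ⊆ 𝓕) (hconv : MixConvex 𝓕₀)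
    (hbdd : Bornology.IsBounded (T '' 𝓕₀)) :
    ∀ F ∈ 𝓕₀, ∀ G ∈ 𝓕₀,
      ContinuousOn (fun lam => T (mix F G lam)) (Set.Icc (0:ℝ) 1) :=
  statement0_general 𝓕 T S hSint hS hcont 𝓕₀ hsub hconv hbdd
end

section
/- Let F be a convex class of probability measures on Ω and let T : F → A ⊆ ℝ^k be identifiable with a strict F-identification function V : A × Ω → ℝ^k. Then for any F, G ∈ F, the path γ : [0,1] → A defined by γ(λ) = T(λF + (1−λ)G) is either constant or injective. -/
open MeasureTheory ENNReal

/-! An identification function turns `T (mix G F lam) = x` into the vanishing of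
`lam ↦ ∫ V x ∂(mix G F lam)`, which is affine in `lam`. If the path takes the same value `x`
at two distinct parameters, this affine function has two zeros, so it vanishes identically, and
strict identification forces `T (mix G F lam) = x` for every `lam ∈ [0, 1]`. -/

theorem eq_zero_of_smul_add_smul_eq_zero {K M : Type*} [Field K] [AddCommGroup M] [Module K M]
    {a b : M} {s t : K} (hst : s ≠ t)
    (hs : (1 - s) • a + s • b = 0) (ht : (1 - t) • a + t • b = 0) : a = 0 ∧ b = 0 := by
  have hba : (s - t) • (b - a) = 0 := by
    calc (s - t) • (b - a) = ((1 - s) • a + s • b) - ((1 - t) • a + t • b) := by module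
      _ = 0 := by rw [hs, ht, sub_zero]
  have hab : a = b :=
    (sub_eq_zero.mp ((smul_eq_zero.mp hba).resolve_left (sub_ne_zero.mpr hst))).symm
  subst hab
  have ha : a = 0 := by simpa [← add_smul] using hs
  exact ⟨ha, ha⟩

theorem integral_mix {Ω E : Type*} [MeasurableSpace Ω] [NormedAddCommGroup E]
    [NormedSpace ℝ E] {F G : Measure Ω} {f : Ω → E} (hF : Integrable f F) (hG : Integrable f G)
    {lam : ℝ} (hlam : lam ∈ Set.Icc (0 : ℝ) 1) :
    ∫ y, f y ∂(mix F G lam) = (1 - lam) • ∫ y, f y ∂F + lam • ∫ y, f y ∂G := by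
  rw [mix, integral_add_measure (hF.smul_measure ofReal_ne_top) (hG.smul_measure ofReal_ne_top),
    integral_smul_measure, integral_smul_measure, toReal_ofReal (by linarith [hlam.2]),
    toReal_ofReal hlam.1]

theorem apply_mix_eq_of_apply_mix_eq {Ω α E : Type*} [MeasurableSpace Ω] [NormedAddCommGroup E]
    [NormedSpace ℝ E] {𝓕 : Set (Measure Ω)} (hconv : MixConvex 𝓕) {A : Set α}
    {T : Measure Ω → α} (hTA : ∀ F ∈ 𝓕, T F ∈ A) {V : α → Ω → E}
    (hVint : ∀ x ∈ A, ∀ F ∈ 𝓕, Integrable (V x) F)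
    (hVzero : ∀ F ∈ 𝓕, ∫ y, V (T F) y ∂F = 0)
    (hVstrict : ∀ F ∈ 𝓕, ∀ x ∈ A, (∫ y, V x y ∂F) = 0 → x = T F)
    {F G : Measure Ω} (hF : F ∈ 𝓕) (hG : G ∈ 𝓕) {l₁ l₂ : ℝ} (hl₁ : l₁ ∈ Set.Icc (0 : ℝ) 1)
    (hl₂ : l₂ ∈ Set.Icc (0 : ℝ) 1) (hne : l₁ ≠ l₂) (heq : T (mix G F l₁) = T (mix G F l₂))
    {lam : ℝ} (hlam : lam ∈ Set.Icc (0 : ℝ) 1) : T (mix G F lam) = T (mix G F l₁) := by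
  set x := T (mix G F l₁)
  have hxA : x ∈ A := hTA _ (hconv G hG F hF l₁ hl₁)
  have hmix : ∀ l ∈ Set.Icc (0 : ℝ) 1,
      ∫ y, V x y ∂(mix G F l) = (1 - l) • ∫ y, V x y ∂G + l • ∫ y, V x y ∂F :=
    fun l hl => integral_mix (hVint x hxA G hG) (hVint x hxA F hF) hl
  have hzero₁ := hVzero _ (hconv G hG F hF l₁ hl₁)
  have hzero₂ := hVzero _ (hconv G hG F hF l₂ hl₂)
  rw [← heq] at hzero₂
  rw [hmix l₁ hl₁] at hzero₁
  rw [hmix l₂ hl₂] at hzero₂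
  obtain ⟨hGx, hFx⟩ := eq_zero_of_smul_add_smul_eq_zero hne hzero₁ hzero₂
  refine (hVstrict _ (hconv G hG F hF lam hlam) x hxA ?_).symm
  rw [hmix lam hlam, hGx, hFx, smul_zero, smul_zero, add_zero]

theorem statement1_general {Ω : Type*} [MeasurableSpace Ω] {k : ℕ}
    (𝓕 : Set (Measure Ω))
    (hconv : MixConvex 𝓕)
    (A : Set (Fin k → ℝ)) (T : Measure Ω → (Fin k → ℝ))
    (hTA : ∀ F ∈ 𝓕, T F ∈ A)
    (V : (Fin k → ℝ) → Ω → (Fin k → ℝ))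
    (hVint : ∀ x ∈ A, ∀ F ∈ 𝓕, Integrable (V x) F)
    (hVzero : ∀ F ∈ 𝓕, ∫ y, V (T F) y ∂F = 0)
    (hVstrict : ∀ F ∈ 𝓕, ∀ x ∈ A, (∫ y, V x y ∂F) = 0 → x = T F)
    (F G : Measure Ω) (hF : F ∈ 𝓕) (hG : G ∈ 𝓕) :
    (∀ lam ∈ Set.Icc (0:ℝ) 1, ∀ lam' ∈ Set.Icc (0:ℝ) 1,
        T (mix G F lam) = T (mix G F lam')) ∨
      Set.InjOn (fun lam => T (mix G F lam)) (Set.Icc (0:ℝ) 1) := by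
  by_cases hinj : Set.InjOn (fun lam => T (mix G F lam)) (Set.Icc (0:ℝ) 1)
  · exact Or.inr hinj
  simp only [Set.InjOn, not_forall, exists_prop] at hinj
  obtain ⟨l₁, hl₁, l₂, hl₂, heq, hne⟩ := hinj
  have hconst : ∀ lam ∈ Set.Icc (0:ℝ) 1, T (mix G F lam) = T (mix G F l₁) := fun lam hlam =>
    apply_mix_eq_of_apply_mix_eq hconv hTA hVint hVzero hVstrict hF hG hl₁ hl₂ hne heq hlam
  exact Or.inl fun lam hlam lam' hlam' => (hconst lam hlam).trans (hconst lam' hlam').symm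

/-- If `𝓕` is convex and `T` is identifiable with a strict
`𝓕`-identification function `V`, then for any `F, G ∈ 𝓕` the path
`γ(lam) = T (lam • F + (1 - lam) • G)` is either constant or injective on `[0,1]`. -/
theorem statement1 {Ω : Type*} [MeasurableSpace Ω] {k : ℕ}
    (𝓕 : Set (Measure Ω)) (hprob : ∀ F ∈ 𝓕, IsProbabilityMeasure F)
    (hconv : MixConvex 𝓕)
    (A : Set (Fin k → ℝ)) (T : Measure Ω → (Fin k → ℝ))
    (hTA : ∀ F ∈ 𝓕, T F ∈ A)
    (V : (Fin k → ℝ) → Ω → (Fin k → ℝ))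
    (hVint : ∀ x ∈ A, ∀ F ∈ 𝓕, Integrable (V x) F)
    (hVzero : ∀ F ∈ 𝓕, ∫ y, V (T F) y ∂F = 0)
    (hVstrict : ∀ F ∈ 𝓕, ∀ x ∈ A, (∫ y, V x y ∂F) = 0 → x = T F)
    (F G : Measure Ω) (hF : F ∈ 𝓕) (hG : G ∈ 𝓕) :
    (∀ lam ∈ Set.Icc (0:ℝ) 1, ∀ lam' ∈ Set.Icc (0:ℝ) 1,
        T (mix G F lam) = T (mix G F lam')) ∨
      Set.InjOn (fun lam => T (mix G F lam)) (Set.Icc (0:ℝ) 1) :=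
  statement1_general 𝓕 hconv A T hTA V hVint hVzero hVstrict F G hF hG
end

section
/- Let T : F → A ⊆ ℝ^k be a functional and S : A × Ω → ℝ a scoring function. Then: (i) for p ∈ [1,∞), if S is (strictly) metrically F-order-sensitive for T relative to the ℓ^p-norm, then S is (strictly) componentwise F-order-sensitive for T; (i′) if S is (strictly) metrically F-order-sensitive for T relative to the ℓ^∞-norm, then S is componentwise F-order-sensitive for T; (i″) if S is (strictly) metrically F-order-sensitive for T relative to the ℓ^∞-norm, then S is (strictly) F-consistent for T; (ii) if S is (strictly) componentwise F-order-sensitive for T, then S is (strictly) F-order-sensitive on line segments for T; (iii) if S is (strictly) F-order-sensitive on line segments for T, then S is (strictly) F-consistent for T. -/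
open MeasureTheory ENNReal

/-- The `ℓ^p`-norm on `ℝ^k`, for `p ∈ [1, ∞]` (given as an extended real). -/
noncomputable def lpNorm {k : ℕ} (p : ℝ≥0∞) (x : Fin k → ℝ) : ℝ :=
  if p = ⊤ then ⨆ i, |x i| else (∑ i, |x i| ^ p.toReal) ^ (1 / p.toReal)

/-- `S` is metrically `𝓕`-order-sensitive for `T` relative to the norm `nrm`. -/
def MetricallyOS {α Ω : Type*} [MeasurableSpace Ω] [Sub α]
    (𝓕 : Set (Measure Ω)) (A : Set α) (T : Measure Ω → α)
    (S : α → Ω → ℝ) (nrm : α → ℝ) : Prop :=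
  ∀ F ∈ 𝓕, ∀ x ∈ A, ∀ z ∈ A,
    nrm (x - T F) ≤ nrm (z - T F) → escore S x F ≤ escore S z F

/-- `S` is strictly metrically `𝓕`-order-sensitive for `T` relative to the norm `nrm`. -/
def StrictlyMetricallyOS {α Ω : Type*} [MeasurableSpace Ω] [Sub α]
    (𝓕 : Set (Measure Ω)) (A : Set α) (T : Measure Ω → α)
    (S : α → Ω → ℝ) (nrm : α → ℝ) : Prop :=
  MetricallyOS 𝓕 A T S nrm ∧
    ∀ F ∈ 𝓕, ∀ x ∈ A, ∀ z ∈ A,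
      nrm (x - T F) < nrm (z - T F) → escore S x F < escore S z F

/-- `S` is componentwise `𝓕`-order-sensitive for `T`. -/
def ComponentwiseOS {Ω : Type*} [MeasurableSpace Ω] {k : ℕ}
    (𝓕 : Set (Measure Ω)) (A : Set (Fin k → ℝ)) (T : Measure Ω → (Fin k → ℝ))
    (S : (Fin k → ℝ) → Ω → ℝ) : Prop :=
  ∀ F ∈ 𝓕, ∀ x ∈ A, ∀ z ∈ A,
    (∀ m, (z m ≤ x m ∧ x m ≤ T F m) ∨ (T F m ≤ x m ∧ x m ≤ z m)) →
    escore S x F ≤ escore S z F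

/-- `S` is strictly componentwise `𝓕`-order-sensitive for `T`. -/
def StrictlyComponentwiseOS {Ω : Type*} [MeasurableSpace Ω] {k : ℕ}
    (𝓕 : Set (Measure Ω)) (A : Set (Fin k → ℝ)) (T : Measure Ω → (Fin k → ℝ))
    (S : (Fin k → ℝ) → Ω → ℝ) : Prop :=
  ComponentwiseOS 𝓕 A T S ∧
    ∀ F ∈ 𝓕, ∀ x ∈ A, ∀ z ∈ A,
      (∀ m, (z m ≤ x m ∧ x m ≤ T F m) ∨ (T F m ≤ x m ∧ x m ≤ z m)) →
      x ≠ z → escore S x F < escore S z F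

/-- `S` is `𝓕`-order-sensitive on line segments for `T`: for every unit vector `v`
(with respect to the Euclidean norm), `s ↦ S̄(T F + s • v, F)` is increasing on
`{s ∈ [0,∞) : T F + s • v ∈ A}`. -/
def LineSegmentOS {Ω : Type*} [MeasurableSpace Ω] {k : ℕ}
    (𝓕 : Set (Measure Ω)) (A : Set (Fin k → ℝ)) (T : Measure Ω → (Fin k → ℝ))
    (S : (Fin k → ℝ) → Ω → ℝ) : Prop :=
  ∀ F ∈ 𝓕, ∀ v : Fin k → ℝ, lpNorm 2 v = 1 →
    MonotoneOn (fun s => escore S (T F + s • v) F)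
      {s : ℝ | 0 ≤ s ∧ T F + s • v ∈ A}

/-- `S` is strictly `𝓕`-order-sensitive on line segments for `T`. -/
def StrictlyLineSegmentOS {Ω : Type*} [MeasurableSpace Ω] {k : ℕ}
    (𝓕 : Set (Measure Ω)) (A : Set (Fin k → ℝ)) (T : Measure Ω → (Fin k → ℝ))
    (S : (Fin k → ℝ) → Ω → ℝ) : Prop :=
  ∀ F ∈ 𝓕, ∀ v : Fin k → ℝ, lpNorm 2 v = 1 →
    StrictMonoOn (fun s => escore S (T F + s • v) F)
      {s : ℝ | 0 ≤ s ∧ T F + s • v ∈ A}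

/-!
If `x` lies componentwise between `T F` and `z`, every coordinate of `x - T F` is at most that
of `z - T F` in absolute value, so a norm that is monotone in the absolute values of the
coordinates (every `ℓ^p` norm, strictly so for `p < ∞`) turns metrical into componentwise
order-sensitivity. Points further out on a ray from `T F` are componentwise further away, which
gives sensitivity on line segments. Finally every `x ≠ T F` is `T F + s • v` with
`s = ‖x - T F‖₂` and `v` a Euclidean unit vector, so comparing `s` with `0` on that ray, or
comparing `x` with `T F` in a metric, gives consistency.
-/

section LpNorm

variable {k : ℕ}

theorem lpNorm_eq_norm (p : ℝ≥0∞) [Fact (1 ≤ p)] (x : Fin k → ℝ) :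
    lpNorm p x = ‖WithLp.toLp p x‖ := by
  unfold _root_.lpNorm
  split_ifs with hp
  · subst hp
    simp [PiLp.norm_eq_ciSup]
  · rw [PiLp.norm_eq_sum (ENNReal.toReal_pos (zero_lt_one.trans_le Fact.out).ne' hp)]
    simp

theorem lpNorm_zero (p : ℝ≥0∞) [Fact (1 ≤ p)] : lpNorm p (0 : Fin k → ℝ) = 0 := by
  simp [lpNorm_eq_norm]

theorem lpNorm_nonneg (p : ℝ≥0∞) [Fact (1 ≤ p)] (x : Fin k → ℝ) : 0 ≤ lpNorm p x := by
  simp [lpNorm_eq_norm]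

theorem lpNorm_pos {p : ℝ≥0∞} [Fact (1 ≤ p)] {x : Fin k → ℝ} (hx : x ≠ 0) :
    0 < lpNorm p x := by
  simpa [lpNorm_eq_norm] using hx

theorem lpNorm_smul {p : ℝ≥0∞} [Fact (1 ≤ p)] {c : ℝ} (hc : 0 ≤ c) (x : Fin k → ℝ) :
    lpNorm p (c • x) = c * lpNorm p x := by
  simp [lpNorm_eq_norm, WithLp.toLp_smul, norm_smul, abs_of_nonneg hc]

theorem lpNorm_le_lpNorm_of_abs_le {p : ℝ≥0∞} (hp : p ≠ 0) {a b : Fin k → ℝ}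
    (h : ∀ i, |a i| ≤ |b i|) : lpNorm p a ≤ lpNorm p b := by
  unfold _root_.lpNorm
  split_ifs with hpt
  · rcases isEmpty_or_nonempty (Fin k) with hk | hk
    · simp
    · exact ciSup_mono (Set.finite_range _).bddAbove h
  · have hpos : 0 < p.toReal := ENNReal.toReal_pos hp hpt
    gcongr (∑ i, ?_) ^ _ with i
    exact Real.rpow_le_rpow (abs_nonneg _) (h i) hpos.le

theorem lpNorm_lt_lpNorm_of_abs_lt {p : ℝ≥0∞} (hp : p ≠ 0) (hpt : p ≠ ⊤) {a b : Fin k → ℝ}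
    (h : ∀ i, |a i| ≤ |b i|) {j : Fin k} (hj : |a j| < |b j|) : lpNorm p a < lpNorm p b := by
  have hpos : 0 < p.toReal := ENNReal.toReal_pos hp hpt
  simp only [_root_.lpNorm, if_neg hpt]
  refine Real.rpow_lt_rpow (by positivity) ?_ (by positivity)
  exact Finset.sum_lt_sum (fun i _ => Real.rpow_le_rpow (abs_nonneg _) (h i) hpos.le)
    ⟨j, Finset.mem_univ j, Real.rpow_lt_rpow (abs_nonneg _) hj hpos⟩

theorem exists_lpNorm_eq_one_add_smul_eq (p : ℝ≥0∞) [Fact (1 ≤ p)] {t x : Fin k → ℝ}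
    (h : x ≠ t) : ∃ s : ℝ, 0 < s ∧ ∃ v, lpNorm p v = 1 ∧ t + s • v = x := by
  have hs : 0 < lpNorm p (x - t) := lpNorm_pos (sub_ne_zero.mpr h)
  refine ⟨lpNorm p (x - t), hs, (lpNorm p (x - t))⁻¹ • (x - t), ?_, ?_⟩
  · rw [lpNorm_smul (inv_nonneg.mpr hs.le), inv_mul_cancel₀ hs.ne']
  · rw [smul_smul, mul_inv_cancel₀ hs.ne', one_smul, add_sub_cancel]

end LpNorm

theorem abs_sub_le_abs_sub_of_between {t x z : ℝ} (h : (z ≤ x ∧ x ≤ t) ∨ (t ≤ x ∧ x ≤ z)) :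
    |x - t| ≤ |z - t| := by
  rcases h with ⟨hzx, hxt⟩ | ⟨htx, hxz⟩
  · rw [abs_of_nonpos (by linarith), abs_of_nonpos (by linarith)]; linarith
  · rw [abs_of_nonneg (by linarith), abs_of_nonneg (by linarith)]; linarith

theorem abs_sub_lt_abs_sub_of_between {t x z : ℝ} (h : (z ≤ x ∧ x ≤ t) ∨ (t ≤ x ∧ x ≤ z))
    (hne : x ≠ z) : |x - t| < |z - t| := by
  rcases h with ⟨hzx, hxt⟩ | ⟨htx, hxz⟩
  · rw [abs_of_nonpos (by linarith), abs_of_nonpos (by linarith)]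
    linarith [lt_of_le_of_ne hzx hne.symm]
  · rw [abs_of_nonneg (by linarith), abs_of_nonneg (by linarith)]
    linarith [lt_of_le_of_ne hxz hne]

theorem between_add_smul_of_le {k : ℕ} (t v : Fin k → ℝ) {s₁ s₂ : ℝ} (hs₁ : 0 ≤ s₁)
    (h : s₁ ≤ s₂) (m : Fin k) :
    ((t + s₂ • v) m ≤ (t + s₁ • v) m ∧ (t + s₁ • v) m ≤ t m) ∨
      (t m ≤ (t + s₁ • v) m ∧ (t + s₁ • v) m ≤ (t + s₂ • v) m) := by
  simp only [Pi.add_apply, Pi.smul_apply, smul_eq_mul]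
  rcases le_total (v m) 0 with hv | hv
  · exact Or.inl ⟨by nlinarith, by nlinarith⟩
  · exact Or.inr ⟨by nlinarith, by nlinarith⟩

section OrderSensitivity

variable {Ω : Type*} [MeasurableSpace Ω] {𝓕 : Set (Measure Ω)}

section Abstract

variable {α : Type*} [AddGroup α] {A : Set α} {T : Measure Ω → α} {S : α → Ω → ℝ}
  {nrm : α → ℝ}

theorem MetricallyOS.consistent (hmin : ∀ a, nrm 0 ≤ nrm a) (hTA : ∀ F ∈ 𝓕, T F ∈ A)
    (h : MetricallyOS 𝓕 A T S nrm) : Consistent 𝓕 A T S := fun F hF x hx =>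
  h F hF (T F) (hTA F hF) x hx (by rw [sub_self]; exact hmin _)

theorem StrictlyMetricallyOS.strictlyConsistent (hmin : ∀ a, nrm 0 ≤ nrm a)
    (hpos : ∀ a ≠ 0, nrm 0 < nrm a) (hTA : ∀ F ∈ 𝓕, T F ∈ A)
    (h : StrictlyMetricallyOS 𝓕 A T S nrm) : StrictlyConsistent 𝓕 A T S := by
  refine ⟨h.1.consistent hmin hTA, fun F hF x hx heq => ?_⟩
  by_contra hne
  have hlt := h.2 F hF (T F) (hTA F hF) x hx
    (by rw [sub_self]; exact hpos _ (sub_ne_zero.mpr hne))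
  exact hlt.ne' heq

end Abstract

variable {k : ℕ} {A : Set (Fin k → ℝ)} {T : Measure Ω → (Fin k → ℝ)}
  {S : (Fin k → ℝ) → Ω → ℝ} {nrm : (Fin k → ℝ) → ℝ}

theorem MetricallyOS.componentwiseOS
    (hmono : ∀ a b, (∀ i, |a i| ≤ |b i|) → nrm a ≤ nrm b)
    (h : MetricallyOS 𝓕 A T S nrm) : ComponentwiseOS 𝓕 A T S :=
  fun F hF x hx z hz hxz => h F hF x hx z hz <| hmono _ _ fun i => by
    simpa using abs_sub_le_abs_sub_of_between (hxz i)

theorem StrictlyMetricallyOS.strictlyComponentwiseOS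
    (hmono : ∀ a b, (∀ i, |a i| ≤ |b i|) → nrm a ≤ nrm b)
    (hsmono : ∀ a b, (∀ i, |a i| ≤ |b i|) → ∀ j, |a j| < |b j| → nrm a < nrm b)
    (h : StrictlyMetricallyOS 𝓕 A T S nrm) : StrictlyComponentwiseOS 𝓕 A T S := by
  refine ⟨h.1.componentwiseOS hmono, fun F hF x hx z hz hxz hne => ?_⟩
  obtain ⟨j, hj⟩ := Function.ne_iff.mp hne
  refine h.2 F hF x hx z hz (hsmono _ _ (fun i => ?_) j ?_)
  · simpa using abs_sub_le_abs_sub_of_between (hxz i)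
  · simpa using abs_sub_lt_abs_sub_of_between (hxz j) hj

theorem ComponentwiseOS.lineSegmentOS (h : ComponentwiseOS 𝓕 A T S) :
    LineSegmentOS 𝓕 A T S := fun F hF v _ _ hs₁ _ hs₂ h₁₂ =>
  h F hF _ hs₁.2 _ hs₂.2 (between_add_smul_of_le (T F) v hs₁.1 h₁₂)

theorem StrictlyComponentwiseOS.strictlyLineSegmentOS (h : StrictlyComponentwiseOS 𝓕 A T S) :
    StrictlyLineSegmentOS 𝓕 A T S := by
  intro F hF v hv s₁ hs₁ s₂ hs₂ h₁₂
  have hv0 : v ≠ 0 := by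
    rintro rfl
    rw [lpNorm_zero] at hv
    exact zero_ne_one hv
  refine h.2 F hF _ hs₁.2 _ hs₂.2 (between_add_smul_of_le (T F) v hs₁.1 h₁₂.le) ?_
  exact (add_right_injective (T F)).ne ((smul_left_injective ℝ hv0).ne h₁₂.ne)

theorem LineSegmentOS.consistent (hTA : ∀ F ∈ 𝓕, T F ∈ A) (h : LineSegmentOS 𝓕 A T S) :
    Consistent 𝓕 A T S := by
  intro F hF x hx
  rcases eq_or_ne x (T F) with rfl | hne
  · exact le_rfl
  obtain ⟨s, hs, v, hv, rfl⟩ := exists_lpNorm_eq_one_add_smul_eq 2 hne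
  simpa using h F hF v hv ⟨le_rfl, by simpa using hTA F hF⟩ ⟨hs.le, hx⟩ hs.le

theorem StrictlyLineSegmentOS.strictlyConsistent (hTA : ∀ F ∈ 𝓕, T F ∈ A)
    (h : StrictlyLineSegmentOS 𝓕 A T S) : StrictlyConsistent 𝓕 A T S := by
  refine ⟨LineSegmentOS.consistent hTA fun F hF v hv => (h F hF v hv).monotoneOn,
    fun F hF x hx heq => ?_⟩
  by_contra hne
  obtain ⟨s, hs, v, hv, rfl⟩ := exists_lpNorm_eq_one_add_smul_eq 2 hne
  have hlt := h F hF v hv ⟨le_rfl, by simpa using hTA F hF⟩ ⟨hs.le, hx⟩ hs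
  simp only [zero_smul, add_zero] at hlt
  exact hlt.ne' heq

end OrderSensitivity

theorem statement6_general {Ω : Type*} [MeasurableSpace Ω] {k : ℕ}
    (𝓕 : Set (Measure Ω))
    (A : Set (Fin k → ℝ)) (T : Measure Ω → (Fin k → ℝ))
    (hTA : ∀ F ∈ 𝓕, T F ∈ A)
    (S : (Fin k → ℝ) → Ω → ℝ) :
    -- (i)
    (∀ p : ℝ≥0∞, 1 ≤ p → p ≠ ⊤ →
      (MetricallyOS 𝓕 A T S (lpNorm p) → ComponentwiseOS 𝓕 A T S) ∧
      (StrictlyMetricallyOS 𝓕 A T S (lpNorm p) → StrictlyComponentwiseOS 𝓕 A T S)) ∧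
    -- (i′)
    ((MetricallyOS 𝓕 A T S (lpNorm ⊤) → ComponentwiseOS 𝓕 A T S) ∧
      (StrictlyMetricallyOS 𝓕 A T S (lpNorm ⊤) → ComponentwiseOS 𝓕 A T S)) ∧
    -- (i″)
    ((MetricallyOS 𝓕 A T S (lpNorm ⊤) → Consistent 𝓕 A T S) ∧
      (StrictlyMetricallyOS 𝓕 A T S (lpNorm ⊤) → StrictlyConsistent 𝓕 A T S)) ∧
    -- (ii)
    ((ComponentwiseOS 𝓕 A T S → LineSegmentOS 𝓕 A T S) ∧
      (StrictlyComponentwiseOS 𝓕 A T S → StrictlyLineSegmentOS 𝓕 A T S)) ∧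
    -- (iii)
    ((LineSegmentOS 𝓕 A T S → Consistent 𝓕 A T S) ∧
      (StrictlyLineSegmentOS 𝓕 A T S → StrictlyConsistent 𝓕 A T S)) := by
  have hmin (a : Fin k → ℝ) : lpNorm ⊤ (0 : Fin k → ℝ) ≤ lpNorm ⊤ a :=
    (lpNorm_zero ⊤).trans_le (lpNorm_nonneg ⊤ a)
  have hpos (a : Fin k → ℝ) (ha : a ≠ 0) : lpNorm ⊤ (0 : Fin k → ℝ) < lpNorm ⊤ a :=
    (lpNorm_zero ⊤).trans_lt (lpNorm_pos ha)
  have hmono {p : ℝ≥0∞} (hp : p ≠ 0) (a b : Fin k → ℝ) (h : ∀ i, |a i| ≤ |b i|) :=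
    lpNorm_le_lpNorm_of_abs_le hp h
  refine ⟨fun p hp hpt => ?_,
    ⟨fun h => h.componentwiseOS (hmono top_ne_zero),
      fun h => h.1.componentwiseOS (hmono top_ne_zero)⟩,
    ⟨fun h => h.consistent hmin hTA, fun h => h.strictlyConsistent hmin hpos hTA⟩,
    ⟨fun h => h.lineSegmentOS, fun h => h.strictlyLineSegmentOS⟩,
    ⟨fun h => h.consistent hTA, fun h => h.strictlyConsistent hTA⟩⟩
  have hp0 : p ≠ 0 := (zero_lt_one.trans_le hp).ne'
  exact ⟨fun h => h.componentwiseOS (hmono hp0),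
    fun h => h.strictlyComponentwiseOS (hmono hp0) fun _ _ hab _ hj =>
      lpNorm_lt_lpNorm_of_abs_lt hp0 hpt hab hj⟩

/-- Logical implications between the notions of order-sensitivity:
(i) metrical (ℓ^p, p ∈ [1,∞)) ⇒ componentwise (also for the strict versions);
(i′) metrical (ℓ^∞) ⇒ componentwise (strict metrical only gives the non-strict version);
(i″) metrical (ℓ^∞) ⇒ consistency (also for the strict versions);
(ii) componentwise ⇒ on line segments (also strict);
(iii) on line segments ⇒ consistency (also strict). -/
theorem statement6 {Ω : Type*} [MeasurableSpace Ω] {k : ℕ}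
    (𝓕 : Set (Measure Ω)) (hprob : ∀ F ∈ 𝓕, IsProbabilityMeasure F)
    (A : Set (Fin k → ℝ)) (T : Measure Ω → (Fin k → ℝ))
    (hTA : ∀ F ∈ 𝓕, T F ∈ A)
    (S : (Fin k → ℝ) → Ω → ℝ)
    (hSint : ∀ x ∈ A, ∀ F ∈ 𝓕, Integrable (S x) F) :
    -- (i)
    (∀ p : ℝ≥0∞, 1 ≤ p → p ≠ ⊤ →
      (MetricallyOS 𝓕 A T S (lpNorm p) → ComponentwiseOS 𝓕 A T S) ∧
      (StrictlyMetricallyOS 𝓕 A T S (lpNorm p) → StrictlyComponentwiseOS 𝓕 A T S)) ∧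
    -- (i′)
    ((MetricallyOS 𝓕 A T S (lpNorm ⊤) → ComponentwiseOS 𝓕 A T S) ∧
      (StrictlyMetricallyOS 𝓕 A T S (lpNorm ⊤) → ComponentwiseOS 𝓕 A T S)) ∧
    -- (i″)
    ((MetricallyOS 𝓕 A T S (lpNorm ⊤) → Consistent 𝓕 A T S) ∧
      (StrictlyMetricallyOS 𝓕 A T S (lpNorm ⊤) → StrictlyConsistent 𝓕 A T S)) ∧
    -- (ii)
    ((ComponentwiseOS 𝓕 A T S → LineSegmentOS 𝓕 A T S) ∧
      (StrictlyComponentwiseOS 𝓕 A T S → StrictlyLineSegmentOS 𝓕 A T S)) ∧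
    -- (iii)
    ((LineSegmentOS 𝓕 A T S → Consistent 𝓕 A T S) ∧
      (StrictlyLineSegmentOS 𝓕 A T S → StrictlyConsistent 𝓕 A T S)) :=
  statement6_general 𝓕 A T hTA S
end

section
/- Let T = (T₁, …, T_k) : F → A ⊆ ℝ^k be a k-dimensional functional with components T_m : F → A_m ⊆ ℝ, where A = A₁ × ⋯ × A_k. If there is a strictly componentwise F-order-sensitive scoring function S : A × Ω → ℝ for T, then each component T_m, m ∈ {1, …, k}, is elicitable; more precisely, for every z ∈ A the scoring function S_{m,z}(x_m, y) := S(z₁, …, z_{m−1}, x_m, z_{m+1}, …, z_k, y) is strictly F-consistent for T_m. -/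
open MeasureTheory ENNReal

open Function

/- Order sensitivity applied to the pair `(update z m (T F m), update z m a)`, which differ only
in the `m`-th coordinate, compares the scores of `T F m` and `a` under `S_{m,z}`. -/
theorem update_apply_between {ι α : Type*} [DecidableEq ι] [LinearOrder α]
    (t z : ι → α) (m : ι) (a : α) (j : ι) :
    (update z m a j ≤ update z m (t m) j ∧ update z m (t m) j ≤ t j) ∨
      (t j ≤ update z m (t m) j ∧ update z m (t m) j ≤ update z m a j) := by
  rcases eq_or_ne j m with rfl | hjm
  · simpa using le_total a (t j)
  · simpa [update_of_ne hjm] using le_total (z j) (t j)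

theorem statement7_general {Ω : Type*} [MeasurableSpace Ω] {k : ℕ}
    (𝓕 : Set (Measure Ω))
    (Am : Fin k → Set ℝ)
    (T : Measure Ω → (Fin k → ℝ))
    (hTA : ∀ F ∈ 𝓕, ∀ m, T F m ∈ Am m)
    (S : (Fin k → ℝ) → Ω → ℝ)
    (hS : StrictlyComponentwiseOS 𝓕 (Set.univ.pi Am) T S) :
    ∀ m : Fin k, ∀ z ∈ Set.univ.pi Am,
      StrictlyConsistent 𝓕 (Am m) (fun F => T F m)
        (fun xm y => S (Function.update z m xm) y) := by
  intro m z hz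
  have hmem : ∀ a ∈ Am m, update z m a ∈ Set.univ.pi Am := fun a ha =>
    (Set.update_mem_pi_iff_of_mem hz).2 fun _ => ha
  refine ⟨fun F hF a ha => hS.1 F hF _ (hmem _ (hTA F hF m)) _ (hmem a ha)
    (update_apply_between (T F) z m a), fun F hF a ha heq => ?_⟩
  by_contra hne
  exact (hS.2 F hF _ (hmem _ (hTA F hF m)) _ (hmem a ha) (update_apply_between (T F) z m a)
    ((update_injective z m).ne (Ne.symm hne))).ne' heq

/-- If `S` is strictly componentwise `𝓕`-order-sensitive for
`T : 𝓕 → A₁ × ⋯ × A_k`, then each component `T_m` is elicitable: for every `z ∈ A`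
the scoring function `(x_m, y) ↦ S(z₁, …, z_{m-1}, x_m, z_{m+1}, …, z_k, y)` is
strictly `𝓕`-consistent for `T_m`. -/
theorem statement7 {Ω : Type*} [MeasurableSpace Ω] {k : ℕ}
    (𝓕 : Set (Measure Ω)) (hprob : ∀ F ∈ 𝓕, IsProbabilityMeasure F)
    (Am : Fin k → Set ℝ)
    (T : Measure Ω → (Fin k → ℝ))
    (hTA : ∀ F ∈ 𝓕, ∀ m, T F m ∈ Am m)
    (S : (Fin k → ℝ) → Ω → ℝ)
    (hSint : ∀ x ∈ Set.univ.pi Am, ∀ F ∈ 𝓕, Integrable (S x) F)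
    (hS : StrictlyComponentwiseOS 𝓕 (Set.univ.pi Am) T S) :
    ∀ m : Fin k, ∀ z ∈ Set.univ.pi Am,
      StrictlyConsistent 𝓕 (Am m) (fun F => T F m)
        (fun xm y => S (Function.update z m xm) y) :=
  statement7_general 𝓕 Am T hTA S hS
end

section
/- Let S : A × Ω → ℝ be strictly metrically F-order-sensitive relative to an ℓ^p-norm for a surjective functional T = (T₁, …, T_k) : F → A ⊆ ℝ^k, with int(A) ≠ ∅, of the additively separable form S(x₁, …, x_k, y) = Σ_{m=1}^k S_m(x_m, y) with each S_m strictly F-consistent for T_m. Let λ₁, …, λ_k > 0 and define S*(x₁, …, x_k, y) = Σ_{m=1}^k λ_m S_m(x_m, y). Then S* is strictly metrically F-order-sensitive for T with respect to the same ℓ^p-norm if and only if λ₁ = λ₂ = ⋯ = λ_k. -/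
open MeasureTheory ENNReal

/-!
Take an interior point `t = T F` and move it by a small `δ > 0` along the `i`-th or the `j`-th
axis. The two forecasts are at the same `ℓ^p`-distance from `t`, so a metrically order-sensitive
score gives them equal expected scores. For a separable score with weights `c` this reads
`c i * d i = c j * d j`, where `d m` is the change of the expected `m`-th component score, nonzero
by strict consistency. With `c = 1` (the score `S`) and `c = lam` (the score `S*`) this forces
`lam i = lam j`. Conversely, equal weights make `S*` a positive multiple of `S`.
-/

section lpNorm

variable {k : ℕ} (p : ℝ≥0∞)

theorem lpNorm_comp_perm (σ : Equiv.Perm (Fin k)) (x : Fin k → ℝ) :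
    _root_.lpNorm p (x ∘ σ) = _root_.lpNorm p x := by
  unfold _root_.lpNorm
  simp only [Function.comp_apply, σ.iSup_comp (g := fun i => |x i|),
    Equiv.sum_comp σ (fun i => |x i| ^ p.toReal)]

theorem lpNorm_single_eq (i j : Fin k) (a : ℝ) :
    _root_.lpNorm p (Pi.single i a) = _root_.lpNorm p (Pi.single j a) := by
  rw [← lpNorm_comp_perm p (Equiv.swap i j), Pi.single_comp_equiv, Equiv.symm_swap,
    Equiv.swap_apply_left]

end lpNorm

theorem exists_pos_add_single_mem {k : ℕ} {A : Set (Fin k → ℝ)} {t : Fin k → ℝ}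
    (ht : t ∈ interior A) : ∃ δ > 0, ∀ m, t + Pi.single m δ ∈ A := by
  have hA : A ∈ nhds t := mem_interior_iff_mem_nhds.mp ht
  have : ∀ᶠ δ in nhdsWithin (0 : ℝ) (Set.Ioi 0), ∀ m, t + Pi.single m δ ∈ A := by
    refine nhdsWithin_le_nhds (Filter.eventually_all.mpr fun m => ?_)
    have hcont : Continuous fun δ : ℝ => t + Pi.single m δ :=
      continuous_const.add (continuous_single (A := fun _ => ℝ) m)
    exact hcont.continuousAt.preimage_mem_nhds (by simpa using hA)
  exact (this.and self_mem_nhdsWithin).exists.imp fun δ h => ⟨h.2, h.1⟩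

section Scores

variable {Ω : Type*} [MeasurableSpace Ω]

theorem MetricallyOS.escore_eq_of_nrm_eq {α : Type*} [Sub α] {𝓕 : Set (Measure Ω)} {A : Set α}
    {T : Measure Ω → α} {S : α → Ω → ℝ} {nrm : α → ℝ} (hS : MetricallyOS 𝓕 A T S nrm)
    {F : Measure Ω} (hF : F ∈ 𝓕) {x z : α} (hx : x ∈ A) (hz : z ∈ A)
    (hxz : nrm (x - T F) = nrm (z - T F)) : escore S x F = escore S z F :=
  le_antisymm (hS F hF x hx z hz hxz.le) (hS F hF z hz x hx hxz.ge)

theorem StrictlyMetricallyOS.of_escore_eq_mul {α : Type*} [Sub α] {𝓕 : Set (Measure Ω)}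
    {A : Set α} {T : Measure Ω → α} {S S' : α → Ω → ℝ} {nrm : α → ℝ} {c : ℝ} (hc : 0 < c)
    (hS' : ∀ F ∈ 𝓕, ∀ x ∈ A, escore S' x F = c * escore S x F)
    (hS : StrictlyMetricallyOS 𝓕 A T S nrm) : StrictlyMetricallyOS 𝓕 A T S' nrm := by
  refine ⟨fun F hF x hx z hz hxz => ?_, fun F hF x hx z hz hxz => ?_⟩
  · rw [hS' F hF x hx, hS' F hF z hz]
    exact mul_le_mul_of_nonneg_left (hS.1 F hF x hx z hz hxz) hc.le
  · rw [hS' F hF x hx, hS' F hF z hz]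
    exact mul_lt_mul_of_pos_left (hS.2 F hF x hx z hz hxz) hc

theorem escore_eq_sum_of_separable {ι : Type*} [Fintype ι] {S : (ι → ℝ) → Ω → ℝ}
    {Sm : ι → ℝ → Ω → ℝ} (c : ι → ℝ) {x : ι → ℝ} {F : Measure Ω}
    (hS : ∀ y, S x y = ∑ m, c m * Sm m (x m) y) (hint : ∀ m, Integrable (Sm m (x m)) F) :
    escore S x F = ∑ m, c m * escore (Sm m) (x m) F := by
  simp only [escore, hS]
  rw [integral_finsetSum _ fun m _ => (hint m).const_mul (c m)]
  simp only [integral_const_mul]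

end Scores

theorem sum_add_single_sub {ι : Type*} [Fintype ι] [DecidableEq ι] (f : ι → ℝ → ℝ)
    (t : ι → ℝ) (i : ι) (δ : ℝ) :
    ∑ m, f m ((t + Pi.single i δ : ι → ℝ) m) - ∑ m, f m (t m) = f i (t i + δ) - f i (t i) := by
  rw [← Finset.sum_sub_distrib, Finset.sum_eq_single i]
  · simp
  · intro m _ hm
    simp [hm]
  · simp

section Separable

variable {Ω : Type*} [MeasurableSpace Ω] {k : ℕ} {A : Set (Fin k → ℝ)}
  {S : (Fin k → ℝ) → Ω → ℝ} {Sm : Fin k → ℝ → Ω → ℝ} {c : Fin k → ℝ} {F : Measure Ω}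

theorem escore_add_single_sub_of_separable
    (hS : ∀ w ∈ A, ∀ y, S w y = ∑ m, c m * Sm m (w m) y)
    (hint : ∀ w ∈ A, ∀ m, Integrable (Sm m (w m)) F) {t : Fin k → ℝ} (ht : t ∈ A) {i : Fin k}
    {δ : ℝ} (hti : t + Pi.single i δ ∈ A) :
    escore S (t + Pi.single i δ) F - escore S t F =
      c i * (escore (Sm i) (t i + δ) F - escore (Sm i) (t i) F) := by
  rw [escore_eq_sum_of_separable c (hS _ hti) (hint _ hti),
    escore_eq_sum_of_separable c (hS _ ht) (hint _ ht),
    sum_add_single_sub (fun m u => c m * escore (Sm m) u F)]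
  ring

theorem MetricallyOS.weight_mul_escore_sub_eq {𝓕 : Set (Measure Ω)} {T : Measure Ω → (Fin k → ℝ)}
    {p : ℝ≥0∞} (hOS : MetricallyOS 𝓕 A T S (_root_.lpNorm p))
    (hS : ∀ w ∈ A, ∀ y, S w y = ∑ m, c m * Sm m (w m) y)
    (hint : ∀ w ∈ A, ∀ m, Integrable (Sm m (w m)) F) (hF : F ∈ 𝓕) {t : Fin k → ℝ} (ht : t ∈ A)
    (hTF : T F = t) {δ : ℝ} (htδ : ∀ m, t + Pi.single m δ ∈ A) (i j : Fin k) :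
    c i * (escore (Sm i) (t i + δ) F - escore (Sm i) (t i) F) =
      c j * (escore (Sm j) (t j + δ) F - escore (Sm j) (t j) F) := by
  have heq : escore S (t + Pi.single i δ) F = escore S (t + Pi.single j δ) F :=
    hOS.escore_eq_of_nrm_eq hF (htδ i) (htδ j) (by
      rw [hTF, add_sub_cancel_left, add_sub_cancel_left, lpNorm_single_eq p i j])
  rw [← escore_add_single_sub_of_separable hS hint ht (htδ i),
    ← escore_add_single_sub_of_separable hS hint ht (htδ j), heq]

end Separable

theorem statement10_general {Ω : Type*} [MeasurableSpace Ω] {k : ℕ}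
    (𝓕 : Set (Measure Ω))
    (A : Set (Fin k → ℝ)) (hAint : (interior A).Nonempty)
    (T : Measure Ω → (Fin k → ℝ))
    (hsurj : ∀ x ∈ A, ∃ F ∈ 𝓕, T F = x)
    (p : ℝ≥0∞)
    (S : (Fin k → ℝ) → Ω → ℝ)
    (Sm : Fin k → ℝ → Ω → ℝ)
    (hform : ∀ x ∈ A, ∀ y : Ω, S x y = ∑ m, Sm m (x m) y)
    (hSmint : ∀ m : Fin k, ∀ xm ∈ {xm : ℝ | ∃ z ∈ A, z m = xm}, ∀ F ∈ 𝓕,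
      Integrable (Sm m xm) F)
    (hSmcons : ∀ m : Fin k,
      StrictlyConsistent 𝓕 {xm : ℝ | ∃ z ∈ A, z m = xm} (fun F => T F m) (Sm m))
    (hS : StrictlyMetricallyOS 𝓕 A T S (lpNorm p))
    (lam : Fin k → ℝ) (hlam : ∀ m, 0 < lam m) :
    StrictlyMetricallyOS 𝓕 A T (fun x y => ∑ m, lam m * Sm m (x m) y) (lpNorm p) ↔
      ∀ i j : Fin k, lam i = lam j := by
  constructor
  · intro hstar i j
    obtain ⟨t, ht⟩ := hAint
    obtain ⟨δ, hδ, htδ⟩ := exists_pos_add_single_mem ht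
    obtain ⟨F, hF, hTF⟩ := hsurj t (interior_subset ht)
    have hint : ∀ w ∈ A, ∀ m, Integrable (Sm m (w m)) F :=
      fun w hw m => hSmint m _ ⟨w, hw, rfl⟩ F hF
    have hgap : escore (Sm i) (t i + δ) F - escore (Sm i) (t i) F ≠ 0 := by
      intro h0
      have := (hSmcons i).2 F hF (t i + δ) ⟨_, htδ i, by simp⟩ (by simp only [hTF]; linarith)
      simp only [hTF, add_eq_left] at this
      exact hδ.ne' this
    have hunit := hS.1.weight_mul_escore_sub_eq (c := fun _ => 1)
      (fun w hw y => by simp [hform w hw]) hint hF (interior_subset ht) hTF htδ i j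
    have hweighted := hstar.1.weight_mul_escore_sub_eq (c := lam)
      (fun _ _ _ => rfl) hint hF (interior_subset ht) hTF htδ i j
    simp only [one_mul] at hunit
    rw [hunit] at hweighted hgap
    exact mul_right_cancel₀ hgap hweighted
  · intro h
    obtain ⟨c, hc, hlamc⟩ : ∃ c > 0, ∀ m, lam m = c := by
      rcases k with _ | k
      · exact ⟨1, one_pos, fun m => m.elim0⟩
      · exact ⟨lam 0, hlam 0, fun m => h m 0⟩
    refine hS.of_escore_eq_mul hc fun F _ x hx => ?_
    simp only [escore, hform x hx, hlamc, ← Finset.mul_sum, integral_const_mul]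

/-- In the setting of an additively separable scoring function
`S(x,y) = ∑ m, S_m(x_m,y)` that is strictly metrically `𝓕`-order-sensitive relative to an
`ℓ^p`-norm for a surjective `T` with `int(A) ≠ ∅`, and positive weights `lam m > 0`, the
reweighted score `S*(x,y) = ∑ m, lam m * S_m(x_m,y)` is strictly metrically
`𝓕`-order-sensitive with respect to the same `ℓ^p`-norm iff all weights coincide. -/
theorem statement10 {Ω : Type*} [MeasurableSpace Ω] {k : ℕ}
    (𝓕 : Set (Measure Ω)) (hprob : ∀ F ∈ 𝓕, IsProbabilityMeasure F)
    (A : Set (Fin k → ℝ)) (hAint : (interior A).Nonempty)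
    (T : Measure Ω → (Fin k → ℝ))
    (hTA : ∀ F ∈ 𝓕, T F ∈ A)
    (hsurj : ∀ x ∈ A, ∃ F ∈ 𝓕, T F = x)
    (p : ℝ≥0∞) (hp : 1 ≤ p)
    (S : (Fin k → ℝ) → Ω → ℝ)
    (Sm : Fin k → ℝ → Ω → ℝ)
    (hform : ∀ x ∈ A, ∀ y : Ω, S x y = ∑ m, Sm m (x m) y)
    (hSmint : ∀ m : Fin k, ∀ xm ∈ {xm : ℝ | ∃ z ∈ A, z m = xm}, ∀ F ∈ 𝓕,
      Integrable (Sm m xm) F)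
    (hSmcons : ∀ m : Fin k,
      StrictlyConsistent 𝓕 {xm : ℝ | ∃ z ∈ A, z m = xm} (fun F => T F m) (Sm m))
    (hS : StrictlyMetricallyOS 𝓕 A T S (lpNorm p))
    (lam : Fin k → ℝ) (hlam : ∀ m, 0 < lam m) :
    StrictlyMetricallyOS 𝓕 A T (fun x y => ∑ m, lam m * Sm m (x m) y) (lpNorm p) ↔
      ∀ i j : Fin k, lam i = lam j :=
  statement10_general 𝓕 A hAint T hsurj p S Sm hform hSmint hSmcons hS lam hlam
end

section
/- Let F be a convex class of probability measures on Ω and p, q : Ω → ℝ two F-integrable functions with q̄(F) := E_F[q(Y)] > 0 for all F ∈ F. Define T : F → A ⊆ ℝ by T(F) = p̄(F)/q̄(F), and assume T is surjective onto A with int(A) ≠ ∅ convex. Then the scoring function S : A × Ω → ℝ, S(x,y) = (1/2) q(y) x² − p(y) x, and any scoring function equivalent to S, is strictly metrically F-order-sensitive for T. -/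
open MeasureTheory ENNReal

/- Completing the square, the expected score `c (q̄ x² / 2 - p̄ x) + ā` is
`(c q̄ / 2) (x - p̄ / q̄)²` plus a term not depending on `x`. As `c q̄ > 0` and `T F = p̄ / q̄`,
it is a strictly increasing function of `|x - T F|`. -/

theorem strictlyMetricallyOS_abs_of_escore_eq_sq {Ω : Type*} [MeasurableSpace Ω]
    {𝓕 : Set (Measure Ω)} {A : Set ℝ} {T : Measure Ω → ℝ} {S : ℝ → Ω → ℝ}
    (h : ∀ F ∈ 𝓕, ∃ k > 0, ∃ b : ℝ, ∀ x, escore S x F = k * (x - T F) ^ 2 + b) :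
    StrictlyMetricallyOS 𝓕 A T S (fun t => |t|) := by
  constructor
  · intro F hF x _ z _ hxz
    obtain ⟨k, hk, b, hS⟩ := h F hF
    rw [hS x, hS z]
    gcongr k * ?_ + b
    exact sq_le_sq.mpr hxz
  · intro F hF x _ z _ hxz
    obtain ⟨k, hk, b, hS⟩ := h F hF
    rw [hS x, hS z]
    gcongr k * ?_ + b
    exact sq_lt_sq.mpr hxz

theorem integral_quadratic_score {Ω : Type*} [MeasurableSpace Ω] {F : Measure Ω}
    {p q a : Ω → ℝ} (hp : Integrable p F) (hq : Integrable q F) (ha : Integrable a F)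
    (c x : ℝ) :
    ∫ y, (c * ((1/2) * q y * x ^ 2 - p y * x) + a y) ∂F
      = c * ((1/2) * (∫ y, q y ∂F) * x ^ 2 - (∫ y, p y ∂F) * x) + ∫ y, a y ∂F := by
  have hqx : Integrable (fun y => (1/2) * q y * x ^ 2) F :=
    (hq.const_mul _).mul_const _
  have hpx : Integrable (fun y => p y * x) F := hp.mul_const _
  have hscore : Integrable (fun y => c * ((1/2) * q y * x ^ 2 - p y * x)) F :=
    (hqx.sub hpx).const_mul c
  rw [integral_add hscore ha, integral_const_mul, integral_sub hqx hpx,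
    integral_mul_const, integral_const_mul, integral_mul_const]

theorem statement11_general {Ω : Type*} [MeasurableSpace Ω]
    (𝓕 : Set (Measure Ω))
    (p q : Ω → ℝ)
    (hpint : ∀ F ∈ 𝓕, Integrable p F) (hqint : ∀ F ∈ 𝓕, Integrable q F)
    (hqpos : ∀ F ∈ 𝓕, 0 < ∫ y, q y ∂F)
    (A : Set ℝ) (T : Measure Ω → ℝ)
    (hT : ∀ F ∈ 𝓕, T F = (∫ y, p y ∂F) / (∫ y, q y ∂F))
    (S' : ℝ → Ω → ℝ) (c : ℝ) (hc : 0 < c)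
    (a : Ω → ℝ) (haint : ∀ F ∈ 𝓕, Integrable a F)
    (hS' : ∀ (x : ℝ) (y : Ω),
      S' x y = c * ((1/2) * q y * x ^ 2 - p y * x) + a y) :
    StrictlyMetricallyOS 𝓕 A T S' (fun t => |t|) := by
  refine strictlyMetricallyOS_abs_of_escore_eq_sq fun F hF => ?_
  have hq := hqpos F hF
  refine ⟨c * (∫ y, q y ∂F) / 2, by positivity,
    (∫ y, a y ∂F) - c * (∫ y, p y ∂F) ^ 2 / (2 * ∫ y, q y ∂F), fun x => ?_⟩
  simp only [escore, hS']
  rw [integral_quadratic_score (hpint F hF) (hqint F hF) (haint F hF), hT F hF]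
  field_simp
  ring

/-- For a ratio of expectations `T(F) = p̄(F)/q̄(F)` with `q̄(F) > 0`,
surjective onto `A` with `int(A) ≠ ∅` convex, the scoring function
`S(x,y) = (1/2) q(y) x² − p(y) x` (and any scoring function equivalent to it) is strictly
metrically `𝓕`-order-sensitive for `T`. -/
theorem statement11 {Ω : Type*} [MeasurableSpace Ω]
    (𝓕 : Set (Measure Ω)) (hprob : ∀ F ∈ 𝓕, IsProbabilityMeasure F)
    (hconv : MixConvex 𝓕)
    (p q : Ω → ℝ)
    (hpint : ∀ F ∈ 𝓕, Integrable p F) (hqint : ∀ F ∈ 𝓕, Integrable q F)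
    (hqpos : ∀ F ∈ 𝓕, 0 < ∫ y, q y ∂F)
    (A : Set ℝ) (T : Measure Ω → ℝ)
    (hT : ∀ F ∈ 𝓕, T F = (∫ y, p y ∂F) / (∫ y, q y ∂F))
    (hTA : ∀ F ∈ 𝓕, T F ∈ A)
    (hsurj : ∀ x ∈ A, ∃ F ∈ 𝓕, T F = x)
    (hAint : (interior A).Nonempty) (hAconv : Convex ℝ (interior A))
    (S' : ℝ → Ω → ℝ) (c : ℝ) (hc : 0 < c)
    (a : Ω → ℝ) (haint : ∀ F ∈ 𝓕, Integrable a F)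
    (hS' : ∀ (x : ℝ) (y : Ω),
      S' x y = c * ((1/2) * q y * x ^ 2 - p y * x) + a y) :
    StrictlyMetricallyOS 𝓕 A T S' (fun t => |t|) :=
  statement11_general 𝓕 p q hpint hqint hqpos A T hT S' c hc a haint hS'
end

section
/- Let k ≥ 2, let F be a convex class of probability measures on Ω, and let p : Ω → ℝ^k, q : Ω → ℝ be F-integrable with q̄(F) := E_F[q(Y)] > 0 for all F ∈ F. Define T : F → A ⊆ ℝ^k by T(F) = p̄(F)/q̄(F), and assume T is surjective onto A with int(A) ≠ ∅. Then the scoring function S : A × Ω → ℝ, S(x₁, …, x_k, y) = Σ_{m=1}^k ( (1/2) q(y) x_m² − p_m(y) x_m ), and any scoring function equivalent to S, is strictly metrically F-order-sensitive for T with respect to the ℓ²-norm. -/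
open MeasureTheory ENNReal

/-! Completing the square, the expected score of `x` under `F` is
`c q̄(F) / 2 · ‖x - T(F)‖₂² + const(F)` with `c q̄(F) > 0`, a strictly increasing function of
the `ℓ²`-distance from `x` to `T(F)`. -/

lemma lpNorm_two_eq_sqrt {k : ℕ} (u : Fin k → ℝ) : lpNorm 2 u = √(∑ i, u i ^ 2) := by
  simp [_root_.lpNorm, Real.sqrt_eq_rpow]

lemma lpNorm_two_nonneg {k : ℕ} (u : Fin k → ℝ) : 0 ≤ lpNorm 2 u := by
  rw [lpNorm_two_eq_sqrt]
  exact Real.sqrt_nonneg _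

lemma lpNorm_two_sq {k : ℕ} (u : Fin k → ℝ) : lpNorm 2 u ^ 2 = ∑ i, u i ^ 2 := by
  rw [lpNorm_two_eq_sqrt, Real.sq_sqrt (Finset.sum_nonneg fun i _ => sq_nonneg (u i))]

theorem strictlyMetricallyOS_of_escore_eq_comp {α Ω : Type*} [MeasurableSpace Ω] [Sub α]
    {𝓕 : Set (Measure Ω)} {A : Set α} {T : Measure Ω → α} {S : α → Ω → ℝ} {nrm : α → ℝ}
    (hnrm : ∀ u, 0 ≤ nrm u)
    (h : ∀ F ∈ 𝓕, ∃ g : ℝ → ℝ, StrictMonoOn g (Set.Ici 0) ∧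
      ∀ x ∈ A, escore S x F = g (nrm (x - T F))) :
    StrictlyMetricallyOS 𝓕 A T S nrm := by
  constructor
  all_goals
    intro F hF x hx z hz
    obtain ⟨g, hg, hS⟩ := h F hF
    rw [hS x hx, hS z hz]
  · exact (hg.le_iff_le (hnrm _) (hnrm _)).2
  · exact (hg.lt_iff_lt (hnrm _) (hnrm _)).2

lemma sum_half_mul_sq_sub_mul_eq {ι : Type*} [Fintype ι] {Q : ℝ} (hQ : Q ≠ 0)
    (P x : ι → ℝ) :
    ∑ m, (1 / 2 * Q * x m ^ 2 - P m * x m) =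
      Q / 2 * ∑ m, (x m - P m / Q) ^ 2 - ∑ m, P m ^ 2 / (2 * Q) := by
  rw [Finset.mul_sum, ← Finset.sum_sub_distrib]
  refine Finset.sum_congr rfl fun m _ => ?_
  field_simp
  ring

lemma integrable_half_mul_sq_sub_mul {Ω ι : Type*} [MeasurableSpace Ω] {F : Measure Ω}
    {p : Ω → ι → ℝ} {q : Ω → ℝ} (hp : ∀ m, Integrable (p · m) F) (hq : Integrable q F)
    (x : ι → ℝ) (m : ι) :
    Integrable (fun y => 1 / 2 * q y * x m ^ 2 - p y m * x m) F :=
  ((hq.const_mul _).mul_const _).sub ((hp m).mul_const _)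

lemma integral_sum_half_mul_sq_sub_mul {Ω ι : Type*} [MeasurableSpace Ω] [Fintype ι]
    {F : Measure Ω} {p : Ω → ι → ℝ} {q : Ω → ℝ} (hp : ∀ m, Integrable (p · m) F)
    (hq : Integrable q F) (x : ι → ℝ) :
    ∫ y, ∑ m, (1 / 2 * q y * x m ^ 2 - p y m * x m) ∂F =
      ∑ m, (1 / 2 * (∫ y, q y ∂F) * x m ^ 2 - (∫ y, p y m ∂F) * x m) := by
  rw [integral_finsetSum _ fun m _ => integrable_half_mul_sq_sub_mul hp hq x m]
  refine Finset.sum_congr rfl fun m _ => ?_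
  rw [integral_sub ((hq.const_mul _).mul_const _) ((hp m).mul_const _),
    integral_mul_const, integral_mul_const, integral_const_mul]

theorem statement12_general {Ω : Type*} [MeasurableSpace Ω] {k : ℕ}
    (𝓕 : Set (Measure Ω)) (p : Ω → (Fin k → ℝ)) (q : Ω → ℝ)
    (hpint : ∀ F ∈ 𝓕, Integrable p F) (hqint : ∀ F ∈ 𝓕, Integrable q F)
    (hqpos : ∀ F ∈ 𝓕, 0 < ∫ y, q y ∂F)
    (A : Set (Fin k → ℝ)) (T : Measure Ω → (Fin k → ℝ))
    (hT : ∀ F ∈ 𝓕, T F = fun m => (∫ y, p y m ∂F) / (∫ y, q y ∂F))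
    (S' : (Fin k → ℝ) → Ω → ℝ) (c : ℝ) (hc : 0 < c)
    (a : Ω → ℝ) (haint : ∀ F ∈ 𝓕, Integrable a F)
    (hS' : ∀ (x : Fin k → ℝ) (y : Ω),
      S' x y = c * (∑ m, ((1/2) * q y * (x m) ^ 2 - p y m * x m)) + a y) :
    StrictlyMetricallyOS 𝓕 A T S' (lpNorm 2) := by
  refine strictlyMetricallyOS_of_escore_eq_comp lpNorm_two_nonneg fun F hF => ?_
  set Q := ∫ y, q y ∂F
  have hQ : 0 < Q := hqpos F hF
  have hQ2 : 0 < Q / 2 := half_pos hQ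
  refine ⟨fun r => c * (Q / 2 * r ^ 2 - ∑ m, (∫ y, p y m ∂F) ^ 2 / (2 * Q)) + ∫ y, a y ∂F,
    ?_, fun x _ => ?_⟩
  · have hlin : StrictMono fun s => c * (Q / 2 * s - ∑ m, (∫ y, p y m ∂F) ^ 2 / (2 * Q)) +
        ∫ y, a y ∂F := fun s t hst => by dsimp only; gcongr
    exact hlin.comp_strictMonoOn (pow_left_strictMonoOn₀ two_ne_zero)
  · have hp := (hpint F hF).eval
    have hsum : Integrable (fun y => ∑ m, (1 / 2 * q y * x m ^ 2 - p y m * x m)) F :=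
      integrable_finsetSum _ fun m _ => integrable_half_mul_sq_sub_mul hp (hqint F hF) x m
    simp only [escore, hS', lpNorm_two_sq, hT F hF]
    rw [integral_add (hsum.const_mul c) (haint F hF), integral_const_mul,
      integral_sum_half_mul_sq_sub_mul hp (hqint F hF), sum_half_mul_sq_sub_mul_eq hQ.ne']
    rfl

/-- For `k ≥ 2` and a vector-valued ratio of expectations
`T(F) = p̄(F)/q̄(F)` with the same denominator `q̄(F) > 0`, surjective onto `A` with
`int(A) ≠ ∅`, the scoring function `S(x,y) = ∑ m, ((1/2) q(y) x_m² − p_m(y) x_m)` (and any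
scoring function equivalent to it) is strictly metrically `𝓕`-order-sensitive for `T`
with respect to the `ℓ²`-norm. -/
theorem statement12 {Ω : Type*} [MeasurableSpace Ω] {k : ℕ} (hk : 2 ≤ k)
    (𝓕 : Set (Measure Ω)) (hprob : ∀ F ∈ 𝓕, IsProbabilityMeasure F)
    (hconv : MixConvex 𝓕)
    (p : Ω → (Fin k → ℝ)) (q : Ω → ℝ)
    (hpint : ∀ F ∈ 𝓕, Integrable p F) (hqint : ∀ F ∈ 𝓕, Integrable q F)
    (hqpos : ∀ F ∈ 𝓕, 0 < ∫ y, q y ∂F)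
    (A : Set (Fin k → ℝ)) (T : Measure Ω → (Fin k → ℝ))
    (hT : ∀ F ∈ 𝓕, T F = fun m => (∫ y, p y m ∂F) / (∫ y, q y ∂F))
    (hTA : ∀ F ∈ 𝓕, T F ∈ A)
    (hsurj : ∀ x ∈ A, ∃ F ∈ 𝓕, T F = x)
    (hAint : (interior A).Nonempty)
    (S' : (Fin k → ℝ) → Ω → ℝ) (c : ℝ) (hc : 0 < c)
    (a : Ω → ℝ) (haint : ∀ F ∈ 𝓕, Integrable a F)
    (hS' : ∀ (x : Fin k → ℝ) (y : Ω),
      S' x y = c * (∑ m, ((1/2) * q y * (x m) ^ 2 - p y m * x m)) + a y) :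
    StrictlyMetricallyOS 𝓕 A T S' (lpNorm 2) :=
  statement12_general 𝓕 p q hpint hqint hqpos A T hT S' c hc a haint hS'
end

section
/- Let F be a family of distribution functions on ℝ with unique medians T_{1/2} : F → ℝ and finite first moments. If every F ∈ F is symmetric around its median in the sense that F(T_{1/2}(F) + x) = 1 − F((T_{1/2}(F) − x)−) for all x ∈ ℝ (where F(u−) denotes the left limit at u), then any scoring function equivalent to the absolute loss S : ℝ × ℝ → ℝ, S(x,y) = |x − y|, is strictly metrically F-order-sensitive for the median T_{1/2}. -/
open MeasureTheory ENNReal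

/-! Symmetry makes the reflection `y ↦ 2t - y` preserve `μ`, so the expected absolute
loss `g x = ∫ |x - y| dμ` is even about the median `t`, and it suffices that `g` is strictly
increasing on `[t, ∞)`. For `a < b` with midpoint `m`, the increment `|b - y| - |a - y|`
equals `b - a` for `y ≤ a`, is nonnegative on `(a, m]` and at least `-(b - a)` beyond `m`;
hence `g b - g a ≥ (b - a) (F a + F m - 1)`, which is positive for `t ≤ a` because
`F a ≥ 1/2` and uniqueness of the median forces `F m > 1/2`. -/

open Set

section

variable {μ : Measure ℝ}

def IsMedian (μ : Measure ℝ) (t : ℝ) : Prop :=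
  μ.real (Iio t) ≤ 1 / 2 ∧ 1 / 2 ≤ μ.real (Iic t)

def IsSymmAbout (μ : Measure ℝ) (t : ℝ) : Prop :=
  ∀ x, μ.real (Iic (t + x)) = 1 - μ.real (Iio (t - x))

lemma IsMedian.half_le_measureReal_Iic [IsFiniteMeasure μ] {t a : ℝ} (ht : IsMedian μ t)
    (hta : t ≤ a) : 1 / 2 ≤ μ.real (Iic a) :=
  ht.2.trans (measureReal_mono (Iic_subset_Iic.mpr hta))

lemma IsMedian.half_lt_measureReal_Iic [IsFiniteMeasure μ] {t m : ℝ} (ht : IsMedian μ t)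
    (hunique : ∀ s, IsMedian μ s → s = t) (htm : t < m) : 1 / 2 < μ.real (Iic m) := by
  refine (ht.half_le_measureReal_Iic htm.le).lt_of_ne fun hm ↦ htm.ne' (hunique m ⟨?_, hm.le⟩)
  exact hm ▸ measureReal_mono Iio_subset_Iic_self

lemma sub_mul_indicator_le_abs_sub_sub_abs_sub {a b : ℝ} (hab : a ≤ b) (y : ℝ) :
    (b - a) * ((Iic a).indicator 1 y + (Iic ((a + b) / 2)).indicator 1 y - 1) ≤
      |b - y| - |a - y| := by
  by_cases hya : y ≤ a
  · have hym : y ≤ (a + b) / 2 := by linarith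
    simp [hya, hym, abs_of_nonneg (sub_nonneg.mpr hya), abs_of_nonneg (by linarith : 0 ≤ b - y)]
  by_cases hym : y ≤ (a + b) / 2
  · simp only [indicator_of_notMem (show y ∉ Iic a from hya), mem_Iic, hym,
      indicator_of_mem, Pi.one_apply]
    rw [abs_of_neg (by linarith : a - y < 0), abs_of_nonneg (by linarith : 0 ≤ b - y)]
    linarith
  · simp only [indicator_of_notMem (show y ∉ Iic a from hya),
      indicator_of_notMem (show y ∉ Iic ((a + b) / 2) from hym)]
    have h := abs_sub_abs_le_abs_sub (a - y) (b - y)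
    rw [show a - y - (b - y) = -(b - a) by ring, abs_neg, abs_of_nonneg (sub_nonneg.mpr hab)] at h
    linarith

lemma integrable_abs_sub [IsFiniteMeasure μ] (hμ : Integrable id μ) (x : ℝ) :
    Integrable (fun y ↦ |x - y|) μ :=
  ((integrable_const x).sub hμ).abs

lemma integral_abs_sub_lt_integral_abs_sub [IsProbabilityMeasure μ] (hμ : Integrable id μ)
    {a b : ℝ} (hab : a < b) (hmass : 1 < μ.real (Iic a) + μ.real (Iic ((a + b) / 2))) :
    ∫ y, |a - y| ∂μ < ∫ y, |b - y| ∂μ := by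
  have hind : ∀ s : Set ℝ, MeasurableSet s → Integrable (s.indicator 1) μ :=
    fun s hs ↦ (integrable_const (1 : ℝ)).indicator hs
  have hsum : Integrable
      (fun y ↦ (Iic a).indicator (1 : ℝ → ℝ) y + (Iic ((a + b) / 2)).indicator 1 y) μ :=
    (hind (Iic a) measurableSet_Iic).add (hind (Iic ((a + b) / 2)) measurableSet_Iic)
  have hlower : (b - a) * (μ.real (Iic a) + μ.real (Iic ((a + b) / 2)) - 1) ≤
      ∫ y, |b - y| - |a - y| ∂μ := calc
    _ = ∫ y, (b - a) *
          ((Iic a).indicator 1 y + (Iic ((a + b) / 2)).indicator 1 y - 1) ∂μ := by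
      rw [integral_const_mul, integral_sub hsum (integrable_const _),
        integral_add (hind _ measurableSet_Iic) (hind _ measurableSet_Iic),
        integral_indicator_one measurableSet_Iic, integral_indicator_one measurableSet_Iic,
        integral_const, probReal_univ, smul_eq_mul, mul_one]
    _ ≤ _ := integral_mono ((hsum.sub (integrable_const _)).const_mul _)
      ((integrable_abs_sub hμ b).sub (integrable_abs_sub hμ a))
      (sub_mul_indicator_le_abs_sub_sub_abs_sub hab.le)
  rw [integral_sub (integrable_abs_sub hμ b) (integrable_abs_sub hμ a)] at hlower
  linarith [mul_pos (sub_pos.mpr hab) (sub_pos.mpr hmass)]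

lemma strictMonoOn_integral_abs_sub [IsProbabilityMeasure μ] (hμ : Integrable id μ) {t : ℝ}
    (ht : IsMedian μ t) (hunique : ∀ s, IsMedian μ s → s = t) :
    StrictMonoOn (fun x ↦ ∫ y, |x - y| ∂μ) (Ici t) := by
  intro a ha b _ hab
  refine integral_abs_sub_lt_integral_abs_sub hμ hab ?_
  linarith [ht.half_le_measureReal_Iic ha,
    ht.half_lt_measureReal_Iic hunique (show t < (a + b) / 2 by linarith [mem_Ici.mp ha])]

lemma map_reflect_eq_self [IsProbabilityMeasure μ] {t : ℝ} (hsym : IsSymmAbout μ t) :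
    μ.map (fun y ↦ 2 * t - y) = μ := by
  have hmeas : Measurable (fun y : ℝ ↦ 2 * t - y) := measurable_const.sub measurable_id
  have : IsProbabilityMeasure (μ.map fun y ↦ 2 * t - y) :=
    Measure.isProbabilityMeasure_map hmeas.aemeasurable
  refine Measure.ext_of_Iic _ _ fun u ↦ ?_
  have hpre : (fun y : ℝ ↦ 2 * t - y) ⁻¹' Iic u = (Iio (2 * t - u))ᶜ := by
    ext y
    simp
  rw [← measureReal_eq_measureReal_iff, map_measureReal_apply hmeas measurableSet_Iic, hpre,
    probReal_compl_eq_one_sub measurableSet_Iio]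
  simpa [show t + (u - t) = u by ring, show t - (u - t) = 2 * t - u by ring]
    using (hsym (u - t)).symm

lemma integral_abs_reflect_sub [IsProbabilityMeasure μ] {t : ℝ} (hsym : IsSymmAbout μ t)
    (x : ℝ) :
    ∫ y, |(2 * t - x) - y| ∂μ = ∫ y, |x - y| ∂μ := by
  conv_rhs => rw [← map_reflect_eq_self hsym]
  rw [integral_map (by fun_prop) (by fun_prop)]
  congr 1 with y
  rw [abs_sub_comm]
  ring_nf

lemma integral_abs_sub_eq_integral_abs_sub_abs [IsProbabilityMeasure μ] {t : ℝ}
    (hsym : IsSymmAbout μ t) (x : ℝ) :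
    ∫ y, |x - y| ∂μ = ∫ y, |(t + |x - t|) - y| ∂μ := by
  rcases le_total t x with htx | hxt
  · rw [abs_of_nonneg (sub_nonneg.mpr htx), add_sub_cancel]
  · rw [abs_of_nonpos (sub_nonpos.mpr hxt), ← integral_abs_reflect_sub hsym x]
    ring_nf

section SymmetricUniqueMedian

variable [IsProbabilityMeasure μ] (hμ : Integrable id μ) {t : ℝ} (ht : IsMedian μ t)
  (hunique : ∀ s, IsMedian μ s → s = t) (hsym : IsSymmAbout μ t)
include hμ ht hunique hsym

lemma integral_abs_sub_lt_iff {x z : ℝ} :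
    ∫ y, |x - y| ∂μ < ∫ y, |z - y| ∂μ ↔ |x - t| < |z - t| := by
  rw [integral_abs_sub_eq_integral_abs_sub_abs hsym x,
    integral_abs_sub_eq_integral_abs_sub_abs hsym z,
    (strictMonoOn_integral_abs_sub hμ ht hunique).lt_iff_lt (by simp) (by simp),
    add_lt_add_iff_left]

lemma integral_abs_sub_le_iff {x z : ℝ} :
    ∫ y, |x - y| ∂μ ≤ ∫ y, |z - y| ∂μ ↔ |x - t| ≤ |z - t| := by
  rw [integral_abs_sub_eq_integral_abs_sub_abs hsym x,
    integral_abs_sub_eq_integral_abs_sub_abs hsym z,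
    (strictMonoOn_integral_abs_sub hμ ht hunique).le_iff_le (by simp) (by simp),
    add_le_add_iff_left]

end SymmetricUniqueMedian

end

lemma escore_eq_mul_integral_abs_sub_add {μ : Measure ℝ} [IsFiniteMeasure μ]
    (hμ : Integrable id μ) {S : ℝ → ℝ → ℝ} {c : ℝ} {a : ℝ → ℝ}
    (ha : Integrable a μ)
    (hS : ∀ x y, S x y = c * |x - y| + a y) (x : ℝ) :
    escore S x μ = c * ∫ y, |x - y| ∂μ + ∫ y, a y ∂μ := by
  simp only [escore, hS]
  rw [integral_add ((integrable_abs_sub hμ x).const_mul c) ha, integral_const_mul]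

/-- If all distributions in `𝓕` have unique medians `T`, finite first
moments and are symmetric around their medians, then any scoring function equivalent to
the absolute loss `S(x,y) = |x − y|` is strictly metrically `𝓕`-order-sensitive for
the median `T`. -/
theorem statement13
    (𝓕 : Set (Measure ℝ)) (hprob : ∀ μ ∈ 𝓕, IsProbabilityMeasure μ)
    (T : Measure ℝ → ℝ)
    (hmed : ∀ μ ∈ 𝓕,
      ((μ (Set.Iio (T μ))).toReal ≤ 1/2 ∧ 1/2 ≤ (μ (Set.Iic (T μ))).toReal) ∧
      ∀ t : ℝ, ((μ (Set.Iio t)).toReal ≤ 1/2 ∧ 1/2 ≤ (μ (Set.Iic t)).toReal) → t = T μ)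
    (hmom : ∀ μ ∈ 𝓕, Integrable (fun y : ℝ => y) μ)
    (hsym : ∀ μ ∈ 𝓕, ∀ x : ℝ,
      (μ (Set.Iic (T μ + x))).toReal = 1 - (μ (Set.Iio (T μ - x))).toReal)
    (S' : ℝ → ℝ → ℝ) (c : ℝ) (hc : 0 < c)
    (a : ℝ → ℝ) (haint : ∀ μ ∈ 𝓕, Integrable a μ)
    (hS' : ∀ x y : ℝ, S' x y = c * |x - y| + a y) :
    StrictlyMetricallyOS 𝓕 Set.univ T S' (fun t => |t|) := by
  have hcompare : ∀ μ ∈ 𝓕, ∀ x z : ℝ,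
      (|x - T μ| ≤ |z - T μ| → escore S' x μ ≤ escore S' z μ) ∧
      (|x - T μ| < |z - T μ| → escore S' x μ < escore S' z μ) := by
    intro μ hμ x z
    have := hprob μ hμ
    obtain ⟨ht, hunique⟩ := hmed μ hμ
    simp only [escore_eq_mul_integral_abs_sub_add (hmom μ hμ) (haint μ hμ) hS',
      add_le_add_iff_right, add_lt_add_iff_right, mul_le_mul_iff_right₀ hc,
      mul_lt_mul_iff_right₀ hc]
    exact ⟨(integral_abs_sub_le_iff (hmom μ hμ) ht hunique (hsym μ hμ)).mpr,
      (integral_abs_sub_lt_iff (hmom μ hμ) ht hunique (hsym μ hμ)).mpr⟩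
  exact ⟨fun μ hμ x _ z _ ↦ (hcompare μ hμ x z).1,
    fun μ hμ x _ z _ ↦ (hcompare μ hμ x z).2⟩
end

section
/- Let S : ℝ^k × ℝ^k → ℝ be a strictly F-consistent scoring function for T : F → ℝ^k with translation invariant score differences, i.e., S(x − z, y − z) − S(x′ − z, y − z) = S(x, y) − S(x′, y) for all x, x′, y, z ∈ ℝ^k. If the point measures δ_y belong to F for all y ∈ ℝ^k and the function y ↦ S(T(δ_y), y) is F-integrable, then S₀(x,y) := S(x,y) − S(T(δ_y), y) is a translation invariant (S₀(x − z, y − z) = S₀(x, y) for all x, y, z), non-negative, strictly F-consistent scoring function for T. -/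
/-!
On a Dirac measure `δ_y` the expected score is `S · y`, so strict consistency says that
`T δ_y` is the unique minimiser of `S · y`. Translation invariance of score differences turns
this into `T δ_{y-z} = T δ_y - z`, which makes `S₀` translation invariant; minimality gives
`S₀ ≥ 0`; and `S₀` differs from `S` by a function of `y` alone, which shifts every expected
score by the same constant and so leaves (strict) consistency intact.
-/

open MeasureTheory ENNReal

section Dirac

variable {α Ω : Type*} [MeasurableSpace Ω] [MeasurableSingletonClass Ω]
  {𝓕 : Set (Measure Ω)} {A : Set α} {T : Measure Ω → α} {S : α → Ω → ℝ} {x : α} {y : Ω}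

theorem escore_dirac (S : α → Ω → ℝ) (x : α) (y : Ω) :
    escore S x (Measure.dirac y) = S x y :=
  integral_dirac _ _

theorem Consistent.le_of_dirac_mem (hS : Consistent 𝓕 A T S) (hy : Measure.dirac y ∈ 𝓕)
    (hx : x ∈ A) : S (T (Measure.dirac y)) y ≤ S x y := by
  simpa only [escore_dirac] using hS _ hy x hx

theorem StrictlyConsistent.eq_of_dirac_mem (hS : StrictlyConsistent 𝓕 A T S)
    (hy : Measure.dirac y ∈ 𝓕) (hx : x ∈ A) (h : S x y = S (T (Measure.dirac y)) y) :
    x = T (Measure.dirac y) :=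
  hS.2 _ hy x hx (by simpa only [escore_dirac] using h)

end Dirac

theorem unique_argmin_sub_eq_sub {G : Type*} [AddGroup G] {s : G → G → ℝ} {t : G → G}
    (hmin : ∀ x y, s (t y) y ≤ s x y) (huniq : ∀ x y, s x y = s (t y) y → x = t y)
    (htrans : ∀ x x' y z, s (x - z) (y - z) - s (x' - z) (y - z) = s x y - s x' y)
    (y z : G) : t (y - z) = t y - z := by
  have hshift : s (t (y - z) + z) y - s (t y) y = s (t (y - z)) (y - z) - s (t y - z) (y - z) := by
    simpa only [add_sub_cancel_right] using (htrans (t (y - z) + z) (t y) y z).symm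
  have hle : s (t (y - z) + z) y ≤ s (t y) y := by
    linarith [hmin (t y - z) (y - z)]
  rw [eq_sub_iff_add_eq]
  exact huniq _ _ (le_antisymm hle (hmin _ _))

section SubFunctionOfOutcome

variable {α Ω : Type*} [MeasurableSpace Ω]
  {𝓕 : Set (Measure Ω)} {A : Set α} {T : Measure Ω → α} {S : α → Ω → ℝ} {g : Ω → ℝ}

theorem escore_sub_right {x : α} {F : Measure Ω} (hS : Integrable (S x) F) (hg : Integrable g F) :
    escore (fun x y => S x y - g y) x F = escore S x F - ∫ y, g y ∂F :=
  integral_sub hS hg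

variable (hSint : ∀ x ∈ A, ∀ F ∈ 𝓕, Integrable (S x) F) (hg : ∀ F ∈ 𝓕, Integrable g F)
include hSint hg

theorem Consistent.sub_right (hS : Consistent 𝓕 A T S) (hTA : ∀ F ∈ 𝓕, T F ∈ A) :
    Consistent 𝓕 A T (fun x y => S x y - g y) := by
  intro F hF x hx
  rw [escore_sub_right (hSint _ (hTA F hF) F hF) (hg F hF),
    escore_sub_right (hSint x hx F hF) (hg F hF)]
  linarith [hS F hF x hx]

theorem StrictlyConsistent.sub_right (hS : StrictlyConsistent 𝓕 A T S)
    (hTA : ∀ F ∈ 𝓕, T F ∈ A) :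
    StrictlyConsistent 𝓕 A T (fun x y => S x y - g y) := by
  refine ⟨hS.1.sub_right hSint hg hTA, fun F hF x hx h => hS.2 F hF x hx ?_⟩
  rwa [escore_sub_right (hSint _ (hTA F hF) F hF) (hg F hF),
    escore_sub_right (hSint x hx F hF) (hg F hF), sub_left_inj] at h

end SubFunctionOfOutcome

theorem statement18_general {k : ℕ}
    (𝓕 : Set (Measure (Fin k → ℝ)))
    (T : Measure (Fin k → ℝ) → (Fin k → ℝ))
    (S : (Fin k → ℝ) → (Fin k → ℝ) → ℝ)
    (hSint : ∀ (x : Fin k → ℝ), ∀ F ∈ 𝓕, Integrable (S x) F)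
    (hS : StrictlyConsistent 𝓕 Set.univ T S)
    (htrans : ∀ x x' y z : Fin k → ℝ,
      S (x - z) (y - z) - S (x' - z) (y - z) = S x y - S x' y)
    (hdirac : ∀ y : Fin k → ℝ, Measure.dirac y ∈ 𝓕)
    (hintT : ∀ F ∈ 𝓕, Integrable (fun y => S (T (Measure.dirac y)) y) F) :
    (∀ x y z : Fin k → ℝ,
      S (x - z) (y - z) - S (T (Measure.dirac (y - z))) (y - z)
        = S x y - S (T (Measure.dirac y)) y) ∧
    (∀ x y : Fin k → ℝ, 0 ≤ S x y - S (T (Measure.dirac y)) y) ∧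
    StrictlyConsistent 𝓕 Set.univ T
      (fun x y => S x y - S (T (Measure.dirac y)) y) := by
  have hmin : ∀ x y, S (T (Measure.dirac y)) y ≤ S x y := fun x y =>
    hS.1.le_of_dirac_mem (hdirac y) (Set.mem_univ x)
  have hequiv : ∀ y z, T (Measure.dirac (y - z)) = T (Measure.dirac y) - z :=
    unique_argmin_sub_eq_sub (t := fun y => T (Measure.dirac y)) hmin
      (fun x y => hS.eq_of_dirac_mem (hdirac y) (Set.mem_univ x)) htrans
  refine ⟨fun x y z => ?_, fun x y => sub_nonneg.2 (hmin x y), ?_⟩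
  · rw [hequiv]
    exact htrans x _ y z
  · exact hS.sub_right (fun x _ => hSint x) hintT (fun _ _ => Set.mem_univ _)

/-- Let `S` be a strictly `𝓕`-consistent scoring function on `ℝ^k × ℝ^k`
for `T` with translation invariant score differences, suppose all Dirac measures `δ_y`
belong to `𝓕` and `y ↦ S(T(δ_y), y)` is `𝓕`-integrable. Then
`S₀(x,y) = S(x,y) − S(T(δ_y), y)` is translation invariant, non-negative, and strictly
`𝓕`-consistent for `T`. -/
theorem statement18 {k : ℕ}
    (𝓕 : Set (Measure (Fin k → ℝ)))
    (hprob : ∀ F ∈ 𝓕, IsProbabilityMeasure F)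
    (T : Measure (Fin k → ℝ) → (Fin k → ℝ))
    (S : (Fin k → ℝ) → (Fin k → ℝ) → ℝ)
    (hSint : ∀ (x : Fin k → ℝ), ∀ F ∈ 𝓕, Integrable (S x) F)
    (hS : StrictlyConsistent 𝓕 Set.univ T S)
    (htrans : ∀ x x' y z : Fin k → ℝ,
      S (x - z) (y - z) - S (x' - z) (y - z) = S x y - S x' y)
    (hdirac : ∀ y : Fin k → ℝ, Measure.dirac y ∈ 𝓕)
    (hintT : ∀ F ∈ 𝓕, Integrable (fun y => S (T (Measure.dirac y)) y) F) :
    (∀ x y z : Fin k → ℝ,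
      S (x - z) (y - z) - S (T (Measure.dirac (y - z))) (y - z)
        = S x y - S (T (Measure.dirac y)) y) ∧
    (∀ x y : Fin k → ℝ, 0 ≤ S x y - S (T (Measure.dirac y)) y) ∧
    StrictlyConsistent 𝓕 Set.univ T
      (fun x y => S x y - S (T (Measure.dirac y)) y) :=
  statement18_general 𝓕 T S hSint hS htrans hdirac hintT
end

section
/- Let A ⊆ ℝ^k be such that Λ(c)x ∈ A for all c > 0 and x ∈ A, where Λ(c) is the k×k diagonal matrix with diagonal entries c, c², …, c^k. Let S : A × ℝ → ℝ be a consistent scoring function for the vector of the first k moments of the form S(x, y) = −φ(x) + ∇φ(x)·(x − (y, y², …, y^k)ᵀ) + a(y), where φ : A → ℝ is convex and differentiable with gradient ∇φ and a : ℝ → ℝ is integrable. Then S has mixed positively homogeneous score differences of degree b ∈ ℝ, i.e., S(Λ(c)x, cy) − S(Λ(c)z, cy) = c^b (S(x, y) − S(z, y)) for all x, z ∈ A, y ∈ ℝ, c > 0, if and only if for every c > 0 the map x ↦ ∇φ(Λ(c)x) Λ(c) − c^b ∇φ(x) is constant on A. -/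
/-!
Let `gradDefect x = ∇φ(Λ(c)x) Λ(c) − c^b ∇φ(x)`. For a Bregman score, the mixed difference
`S(Λ(c)x, cy) − S(Λ(c)z, cy) − c^b (S(x,y) − S(z,y))` is the polynomial
`ψ(x) − ψ(z) − ∑ᵢ (gradDefect x − gradDefect z)ᵢ yⁱ⁺¹` in `y`, where `ψ = lamOffset` (the term
`a(y)` cancels). If it vanishes for all `y`, all its coefficients vanish. Conversely, if `gradDefect`
equals a constant `g` on `A`, then `−ψ` agrees on `A` with `φ ∘ Λ(c) − c^b φ − ⟨g, ·⟩`, whose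
derivative `gradDefect − g` vanishes there, so `ψ` is constant on the convex set `A`.
-/

open MeasureTheory ENNReal

/-- The continuous linear map `w ↦ ∑ i, g i * w i`, used to express gradients on `ℝ^k`. -/
noncomputable def dotCLM {k : ℕ} (g : Fin k → ℝ) : (Fin k → ℝ) →L[ℝ] ℝ :=
  ∑ i, g i • (ContinuousLinearMap.proj i : (Fin k → ℝ) →L[ℝ] ℝ)

/-- `Λ(c)` is the diagonal matrix with diagonal entries `c, c², …, c^k`, acting on `ℝ^k`. -/
def Lam {k : ℕ} (c : ℝ) (x : Fin k → ℝ) : Fin k → ℝ :=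
  fun i => c ^ (i.1 + 1) * x i

lemma dotCLM_apply {k : ℕ} (g w : Fin k → ℝ) : dotCLM g w = ∑ i, g i * w i := by
  simp [dotCLM, smul_eq_mul]

noncomputable def lamCLM {k : ℕ} (c : ℝ) : (Fin k → ℝ) →L[ℝ] (Fin k → ℝ) :=
  ContinuousLinearMap.pi fun i => c ^ (i.1 + 1) • ContinuousLinearMap.proj i

lemma lamCLM_apply {k : ℕ} (c : ℝ) (x : Fin k → ℝ) : lamCLM c x = Lam c x := by
  funext i
  simp [lamCLM, Lam]

lemma Convex.is_const_of_hasFDerivAt_eq_zero {E G : Type*} [NormedAddCommGroup E]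
    [NormedSpace ℝ E] [NormedAddCommGroup G] [NormedSpace ℝ G] {s : Set E} {f : E → G}
    (hs : Convex ℝ s) (hf : ∀ u ∈ s, HasFDerivAt f (0 : E →L[ℝ] G) u)
    {x y : E} (hx : x ∈ s) (hy : y ∈ s) : f x = f y := by
  have h := hs.norm_image_sub_le_of_norm_hasFDerivWithin_le
    (fun u hu => (hf u hu).hasFDerivWithinAt) (fun _ _ => norm_zero.le) hy hx
  rwa [zero_mul, norm_le_zero_iff, sub_eq_zero] at h

lemma eq_zero_of_forall_sum_mul_pow_succ_eq_zero {R : Type*} [CommRing R] [IsDomain R]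
    [Infinite R] {k : ℕ} (d : Fin k → R) (h : ∀ y : R, ∑ j, d j * y ^ (j.1 + 1) = 0) :
    d = 0 := by
  open Polynomial in
  set p : R[X] := ∑ j, C (d j) * X ^ (j.1 + 1)
  have hp : p = 0 := Polynomial.funext fun y => by simpa [p, eval_finsetSum] using h y
  funext i
  have hcoeff := congrArg (coeff · (i.1 + 1)) hp
  simpa [p, finsetSum_coeff, coeff_C_mul_X_pow, Fin.val_inj] using hcoeff

section BregmanScore

variable {k : ℕ} (φ : (Fin k → ℝ) → ℝ) (Dφ : (Fin k → ℝ) → Fin k → ℝ) (a : ℝ → ℝ) (c b : ℝ)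

noncomputable def bregmanScore (x : Fin k → ℝ) (y : ℝ) : ℝ :=
  -(φ x) + (∑ i, Dφ x i * (x i - y ^ (i.1 + 1))) + a y

noncomputable def gradDefect (x : Fin k → ℝ) : Fin k → ℝ :=
  fun i => c ^ (i.1 + 1) * Dφ (Lam c x) i - c ^ b * Dφ x i

noncomputable def lamOffset (x : Fin k → ℝ) : ℝ :=
  -(φ (Lam c x)) + c ^ b * φ x + ∑ i, gradDefect Dφ c b x i * x i

lemma bregmanScore_lam_sub_rpow_mul (x : Fin k → ℝ) (y : ℝ) :
    bregmanScore φ Dφ a (Lam c x) (c * y) - c ^ b * bregmanScore φ Dφ a x y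
      = lamOffset φ Dφ c b x - ∑ i, gradDefect Dφ c b x i * y ^ (i.1 + 1)
        + (a (c * y) - c ^ b * a y) := by
  have hsum : ∑ i, Dφ (Lam c x) i * (Lam c x i - (c * y) ^ (i.1 + 1))
        - c ^ b * ∑ i, Dφ x i * (x i - y ^ (i.1 + 1))
      = ∑ i, gradDefect Dφ c b x i * x i - ∑ i, gradDefect Dφ c b x i * y ^ (i.1 + 1) := by
    rw [Finset.mul_sum, ← Finset.sum_sub_distrib, ← Finset.sum_sub_distrib]
    exact Finset.sum_congr rfl fun i _ => by simp only [gradDefect, Lam, mul_pow]; ring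
  simp only [bregmanScore, lamOffset]
  linear_combination hsum

lemma bregmanScore_lam_homogeneous_iff (x z : Fin k → ℝ) (y : ℝ) :
    bregmanScore φ Dφ a (Lam c x) (c * y) - bregmanScore φ Dφ a (Lam c z) (c * y)
        = c ^ b * (bregmanScore φ Dφ a x y - bregmanScore φ Dφ a z y) ↔
      lamOffset φ Dφ c b x - lamOffset φ Dφ c b z
        = ∑ i, (gradDefect Dφ c b x i - gradDefect Dφ c b z i) * y ^ (i.1 + 1) := by
  have hx := bregmanScore_lam_sub_rpow_mul φ Dφ a c b x y
  have hz := bregmanScore_lam_sub_rpow_mul φ Dφ a c b z y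
  simp only [sub_mul, Finset.sum_sub_distrib]
  constructor
  · intro h
    linear_combination h - hx + hz
  · intro h
    linear_combination h + hx - hz

variable {φ Dφ c}

lemma hasFDerivAt_comp_lam_sub_rpow_mul {u : Fin k → ℝ}
    (hΛu : HasFDerivAt φ (dotCLM (Dφ (Lam c u))) (Lam c u))
    (hu : HasFDerivAt φ (dotCLM (Dφ u)) u) :
    HasFDerivAt (fun v => φ (Lam c v) - c ^ b * φ v) (dotCLM (gradDefect Dφ c b u)) u := by
  rw [← lamCLM_apply] at hΛu
  have hcomp := (hΛu.comp u (lamCLM c).hasFDerivAt).sub (hu.const_mul (c ^ b))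
  simp only [Function.comp_def, lamCLM_apply] at hcomp
  refine hcomp.congr_fderiv (ContinuousLinearMap.ext fun w => ?_)
  simp only [sub_apply, ContinuousLinearMap.comp_apply, smul_apply, smul_eq_mul, dotCLM_apply,
    lamCLM_apply, Finset.mul_sum, ← Finset.sum_sub_distrib]
  exact Finset.sum_congr rfl fun i _ => by simp only [gradDefect, Lam]; ring

lemma lamOffset_eq_of_gradDefect_eq {A : Set (Fin k → ℝ)} (hA : Convex ℝ A)
    (hAc : ∀ u ∈ A, Lam c u ∈ A) (hφ : ∀ u ∈ A, HasFDerivAt φ (dotCLM (Dφ u)) u)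
    {g : Fin k → ℝ} (hg : ∀ u ∈ A, gradDefect Dφ c b u = g)
    {x z : Fin k → ℝ} (hx : x ∈ A) (hz : z ∈ A) :
    lamOffset φ Dφ c b x = lamOffset φ Dφ c b z := by
  have hconst : ∀ u ∈ A, HasFDerivAt (fun v => φ (Lam c v) - c ^ b * φ v - dotCLM g v) 0 u :=
    fun u hu =>
      ((hasFDerivAt_comp_lam_sub_rpow_mul b (hφ _ (hAc u hu)) (hφ u hu)).sub
        (dotCLM g).hasFDerivAt).congr_fderiv (by rw [hg u hu, sub_self])
  have hoffset : ∀ u ∈ A,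
      lamOffset φ Dφ c b u = -(φ (Lam c u) - c ^ b * φ u - dotCLM g u) := fun u hu => by
    rw [lamOffset, hg u hu, dotCLM_apply]
    simp only [mul_comm (g _)]
    ring
  rw [hoffset x hx, hoffset z hz, hA.is_const_of_hasFDerivAt_eq_zero hconst hx hz]

end BregmanScore

theorem statement19_general {k : ℕ}
    (A : Set (Fin k → ℝ)) (hA : ∀ c : ℝ, 0 < c → ∀ x ∈ A, Lam c x ∈ A)
    (φ : (Fin k → ℝ) → ℝ) (Dφ : (Fin k → ℝ) → (Fin k → ℝ))
    (hφconv : ConvexOn ℝ A φ)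
    (hφdiff : ∀ x ∈ A, HasFDerivAt φ (dotCLM (Dφ x)) x)
    (a : ℝ → ℝ)
    (S : (Fin k → ℝ) → ℝ → ℝ)
    (hSform : ∀ x ∈ A, ∀ y : ℝ,
      S x y = -(φ x) + (∑ i, Dφ x i * (x i - y ^ (i.1 + 1))) + a y)
    (b : ℝ) :
    (∀ c : ℝ, 0 < c → ∀ x ∈ A, ∀ z ∈ A, ∀ y : ℝ,
        S (Lam c x) (c * y) - S (Lam c z) (c * y) = c ^ b * (S x y - S z y)) ↔
      (∀ c : ℝ, 0 < c → ∀ x ∈ A, ∀ z ∈ A, ∀ i : Fin k,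
        c ^ (i.1 + 1) * Dφ (Lam c x) i - c ^ b * Dφ x i
          = c ^ (i.1 + 1) * Dφ (Lam c z) i - c ^ b * Dφ z i) := by
  have hS : ∀ x ∈ A, S x = bregmanScore φ Dφ a x := fun x hx => funext (hSform x hx)
  constructor
  · intro h c hc x hx z hz
    have hdiff : ∀ y : ℝ, lamOffset φ Dφ c b x - lamOffset φ Dφ c b z
        = ∑ i, (gradDefect Dφ c b x i - gradDefect Dφ c b z i) * y ^ (i.1 + 1) := fun y => by
      rw [← bregmanScore_lam_homogeneous_iff φ Dφ a, ← hS x hx, ← hS z hz,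
        ← hS _ (hA c hc x hx), ← hS _ (hA c hc z hz)]
      exact h c hc x hx z hz y
    have hoffset : lamOffset φ Dφ c b x - lamOffset φ Dφ c b z = 0 := by simpa using hdiff 0
    have hdefect := eq_zero_of_forall_sum_mul_pow_succ_eq_zero _ fun y =>
      (hdiff y).symm.trans hoffset
    exact fun i => sub_eq_zero.1 (congrFun hdefect i)
  · intro h c hc x hx z hz y
    have hconst : ∀ u ∈ A, gradDefect Dφ c b u = gradDefect Dφ c b z :=
      fun u hu => funext (h c hc u hu z hz)
    rw [hS x hx, hS z hz, hS _ (hA c hc x hx), hS _ (hA c hc z hz),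
      bregmanScore_lam_homogeneous_iff, hconst x hx,
      lamOffset_eq_of_gradDefect_eq b hφconv.1 (hA c hc) hφdiff hconst hx hz]
    simp only [sub_self, zero_mul, Finset.sum_const_zero]

/-- Let `A ⊆ ℝ^k` be stable under `Λ(c)`, `c > 0`, and let `S` be a
consistent scoring function for the vector of the first `k` moments of Bregman form
`S(x,y) = −φ(x) + ∇φ(x)·(x − (y, y², …, y^k)) + a(y)`, with `φ` convex differentiable with
gradient `Dφ`. Then `S` has mixed positively homogeneous score differences of degree `b`
iff for every `c > 0` the map `x ↦ ∇φ(Λ(c)x) Λ(c) − c^b ∇φ(x)` is constant on `A`. -/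
theorem statement19 {k : ℕ}
    (A : Set (Fin k → ℝ)) (hA : ∀ c : ℝ, 0 < c → ∀ x ∈ A, Lam c x ∈ A)
    (𝓕 : Set (Measure ℝ)) (hprob : ∀ F ∈ 𝓕, IsProbabilityMeasure F)
    (hmom : ∀ F ∈ 𝓕, ∀ m : Fin k, Integrable (fun y : ℝ => y ^ (m.1 + 1)) F)
    (φ : (Fin k → ℝ) → ℝ) (Dφ : (Fin k → ℝ) → (Fin k → ℝ))
    (hφconv : ConvexOn ℝ A φ)
    (hφdiff : ∀ x ∈ A, HasFDerivAt φ (dotCLM (Dφ x)) x)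
    (a : ℝ → ℝ) (haint : ∀ F ∈ 𝓕, Integrable a F)
    (S : (Fin k → ℝ) → ℝ → ℝ)
    (hSform : ∀ x ∈ A, ∀ y : ℝ,
      S x y = -(φ x) + (∑ i, Dφ x i * (x i - y ^ (i.1 + 1))) + a y)
    (hcons : Consistent 𝓕 A (fun F => fun i => ∫ y, y ^ (i.1 + 1) ∂F) S)
    (b : ℝ) :
    (∀ c : ℝ, 0 < c → ∀ x ∈ A, ∀ z ∈ A, ∀ y : ℝ,
        S (Lam c x) (c * y) - S (Lam c z) (c * y) = c ^ b * (S x y - S z y)) ↔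
      (∀ c : ℝ, 0 < c → ∀ x ∈ A, ∀ z ∈ A, ∀ i : Fin k,
        c ^ (i.1 + 1) * Dφ (Lam c x) i - c ^ b * Dφ x i
          = c ^ (i.1 + 1) * Dφ (Lam c z) i - c ^ b * Dφ z i) :=
  statement19_general A hA φ Dφ hφconv hφdiff a S hSform b
end
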